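/- arXiv:2205.06027 — 9 statements merged into one kernel-verified Lean document; each statement's English description precedes it below -/
import Mathlib

section
/- Let X, Y be finite sets, W a channel from X to Y, c : X → [0,∞) a cost function, λ ∈ [0,1), ν ≥ 0, and p_X a probability mass function on X. Define J(q_{XY}, p_X) = E_{q_{XY}}[ log( q_{Y|X}(Y|X)^{1−λ} q_Y(Y)^λ / (W(Y|X) e^{−λν c(X)}) ) ] + (1−λ) D(q_X ‖ p_X). Then min over joint distributions q_{XY} of J(q_{XY}, p_X) equals E_0^{(−λ,ν)}(p_X|W) := − log Σ_y [ Σ_x p_X(x) ( W(y|x) e^{−λν c(x)} )^{1/(1−λ)} ]^{1−λ}, and the minimum is attained by q_{X|Y}(x|y) = p_X(x)(W(y|x)e^{−λν c(x)})^{1/(1−λ)} / Σ_{x'} p_X(x')(W(y|x')e^{−λν c(x')})^{1/(1−λ)} and q_Y(y) proportional to ( Σ_x p_X(x)(W(y|x)e^{−λν c(x)})^{1/(1−λ)} )^{1−λ}. -/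
/-!
Write `V(x, y) = W(y|x) e^{-λνc(x)}`, `g = p V^{1/(1-λ)}`, `Z_y = Σ_x g(x, y)` and
`S = Σ_y Z_y^{1-λ}`, so that `q*(x, y) = g(x, y) Z_y^{-λ} / S` has `Y`-marginal `Z_y^{1-λ} / S`.
Expanding the logarithms term by term gives, for every admissible `q`,
`J(q) = (1-λ) D(q ‖ q*) + λ D(q_Y ‖ q*_Y) - log S`.
Both divergences are nonnegative by Gibbs' inequality and vanish at `q = q*`.
-/

open Finset Real

theorem sub_le_mul_log_div {a b : ℝ} (ha : 0 ≤ a) (hb : 0 ≤ b) (hab : b = 0 → a = 0) :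
    a - b ≤ a * log (a / b) := by
  rcases hb.eq_or_lt with rfl | hb
  · simp [hab rfl]
  have key := mul_le_mul_of_nonneg_left (self_sub_one_le_mul_log (div_nonneg ha hb.le)) hb.le
  rwa [mul_sub, mul_div_cancel₀ _ hb.ne', mul_one, ← mul_assoc, mul_div_cancel₀ _ hb.ne']
    at key

/-- Through `log 0 = 0` and `x / 0 = 0`, terms with `a i = 0` contribute `0`, as in the usual
convention `0 log (0 / b) = 0`. -/
noncomputable def relEntropy {ι : Type*} [Fintype ι] (a b : ι → ℝ) : ℝ :=
  ∑ i, a i * log (a i / b i)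

theorem relEntropy_nonneg {ι : Type*} [Fintype ι] {a b : ι → ℝ} (ha : ∀ i, 0 ≤ a i)
    (hb : ∀ i, 0 ≤ b i) (hab : ∀ i, b i = 0 → a i = 0) (hsum : ∑ i, b i ≤ ∑ i, a i) :
    0 ≤ relEntropy a b :=
  calc (0 : ℝ) ≤ ∑ i, (a i - b i) := by rw [sum_sub_distrib]; linarith
    _ ≤ relEntropy a b := sum_le_sum fun i _ => sub_le_mul_log_div (ha i) (hb i) (hab i)

theorem relEntropy_self {ι : Type*} [Fintype ι] (a : ι → ℝ) : relEntropy a a = 0 := by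
  refine sum_eq_zero fun i _ => ?_
  rcases eq_or_ne (a i) 0 with h | h
  · simp [h]
  · rw [div_self h, log_one, mul_zero]

theorem log_tilted_decomposition {lam q qX qY p v Z S : ℝ} (hlam : lam ≠ 1) (hq : 0 < q)
    (hqX : 0 < qX) (hqY : 0 < qY) (hp : 0 < p) (hv : 0 < v) (hZ : 0 < Z) (hS : 0 < S) :
    log ((q / qX) ^ (1 - lam) * qY ^ lam / v) + (1 - lam) * log (qX / p) + log S =
      (1 - lam) * log (q / (p * v ^ ((1 : ℝ) / (1 - lam)) * Z ^ (-lam) / S)) +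
        lam * log (qY / (Z ^ (1 - lam) / S)) := by
  have h1 : 1 - lam ≠ 0 := sub_ne_zero.mpr (Ne.symm hlam)
  simp (disch := positivity) only [log_div, log_mul, log_rpow]
  field_simp
  ring

namespace TiltedChannel

variable {X Y : Type*} (lam : ℝ) (p : X → ℝ) (V : X → Y → ℝ)

noncomputable def tiltedWeight (x : X) (y : Y) : ℝ := p x * V x y ^ ((1 : ℝ) / (1 - lam))

variable {lam p V}

theorem tiltedWeight_nonneg (hp : ∀ x, 0 ≤ p x) (hV : ∀ x y, 0 ≤ V x y) (x : X) (y : Y) :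
    0 ≤ tiltedWeight lam p V x y :=
  mul_nonneg (hp x) (rpow_nonneg (hV x y) _)

theorem tiltedWeight_pos {x : X} {y : Y} (hp : 0 < p x) (hV : 0 < V x y) :
    0 < tiltedWeight lam p V x y :=
  mul_pos hp (rpow_pos_of_pos hV _)

theorem pos_of_absCont {q : X → Y → ℝ} (hp : ∀ x, 0 ≤ p x) (hV : ∀ x y, 0 ≤ V x y)
    (hqac : ∀ x y, p x * V x y = 0 → q x y = 0) {x : X} {y : Y} (hq : q x y ≠ 0) :
    0 < p x ∧ 0 < V x y := by
  have hpV := mt (hqac x y) hq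
  exact ⟨(hp x).lt_of_ne' (left_ne_zero_of_mul hpV),
    (hV x y).lt_of_ne' (right_ne_zero_of_mul hpV)⟩

variable [Fintype X]

variable (lam p V) in
noncomputable def tiltedMass (y : Y) : ℝ := ∑ x, tiltedWeight lam p V x y

theorem tiltedWeight_le_tiltedMass (hp : ∀ x, 0 ≤ p x) (hV : ∀ x y, 0 ≤ V x y)
    (x : X) (y : Y) :
    tiltedWeight lam p V x y ≤ tiltedMass lam p V y :=
  single_le_sum (fun x' _ => tiltedWeight_nonneg hp hV x' y) (mem_univ x)

theorem tiltedMass_nonneg (hp : ∀ x, 0 ≤ p x) (hV : ∀ x y, 0 ≤ V x y) (y : Y) :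
    0 ≤ tiltedMass lam p V y :=
  sum_nonneg fun x _ => tiltedWeight_nonneg hp hV x y

variable [Fintype Y]

variable (lam p V)

noncomputable def partitionSum : ℝ := ∑ y, tiltedMass lam p V y ^ (1 - lam)

noncomputable def optimalJoint (x : X) (y : Y) : ℝ :=
  tiltedWeight lam p V x y * tiltedMass lam p V y ^ (-lam) / partitionSum lam p V

noncomputable def objective (q : X → Y → ℝ) : ℝ :=
  (∑ x, ∑ y,
      q x y * log ((q x y / ∑ y', q x y') ^ (1 - lam) * (∑ x', q x' y) ^ lam / V x y)) +
    (1 - lam) * ∑ x, (∑ y, q x y) * log ((∑ y, q x y) / p x)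

variable {lam p V}

theorem partitionSum_pos (hp : ∀ x, 0 ≤ p x) (hV : ∀ x y, 0 ≤ V x y) {x : X} {y : Y}
    (hpx : 0 < p x) (hVxy : 0 < V x y) : 0 < partitionSum lam p V := by
  have hZ : 0 < tiltedMass lam p V y :=
    (tiltedWeight_pos hpx hVxy).trans_le (tiltedWeight_le_tiltedMass hp hV x y)
  exact (rpow_pos_of_pos hZ _).trans_le <|
    single_le_sum (fun y' _ => rpow_nonneg (tiltedMass_nonneg hp hV y') _) (mem_univ y)

theorem optimalJoint_nonneg (hp : ∀ x, 0 ≤ p x) (hV : ∀ x y, 0 ≤ V x y)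
    (hS : 0 < partitionSum lam p V) (x : X) (y : Y) : 0 ≤ optimalJoint lam p V x y :=
  div_nonneg (mul_nonneg (tiltedWeight_nonneg hp hV x y)
    (rpow_nonneg (tiltedMass_nonneg hp hV y) _)) hS.le

theorem optimalJoint_pos (hp : ∀ x, 0 ≤ p x) (hV : ∀ x y, 0 ≤ V x y)
    (hS : 0 < partitionSum lam p V) {x : X} {y : Y} (hpx : 0 < p x) (hVxy : 0 < V x y) :
    0 < optimalJoint lam p V x y := by
  have hg := tiltedWeight_pos (lam := lam) hpx hVxy
  have hZ := hg.trans_le (tiltedWeight_le_tiltedMass hp hV x y)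
  exact div_pos (mul_pos hg (rpow_pos_of_pos hZ _)) hS

theorem sum_optimalJoint_fst (hlam : lam ≠ 1) (hp : ∀ x, 0 ≤ p x) (hV : ∀ x y, 0 ≤ V x y)
    (y : Y) :
    ∑ x, optimalJoint lam p V x y = tiltedMass lam p V y ^ (1 - lam) / partitionSum lam p V := by
  have hZ := tiltedMass_nonneg (lam := lam) hp hV y
  simp only [optimalJoint]
  rw [← sum_div, ← sum_mul, show 1 - lam = 1 + -lam by ring,
    rpow_add' hZ (by rwa [← sub_eq_add_neg, sub_ne_zero, ne_comm]), rpow_one]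
  rfl

theorem sum_optimalJoint (hlam : lam ≠ 1) (hp : ∀ x, 0 ≤ p x) (hV : ∀ x y, 0 ≤ V x y)
    (hS : 0 < partitionSum lam p V) : ∑ x, ∑ y, optimalJoint lam p V x y = 1 := by
  rw [sum_comm]
  simp only [sum_optimalJoint_fst hlam hp hV]
  exact (sum_div _ _ _).symm.trans (div_self hS.ne')

theorem objective_eq (hlam : lam ≠ 1) (hp : ∀ x, 0 ≤ p x) (hV : ∀ x y, 0 ≤ V x y)
    (hS : 0 < partitionSum lam p V) {q : X → Y → ℝ} (hq0 : ∀ x y, 0 ≤ q x y)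
    (hq1 : ∑ x, ∑ y, q x y = 1) (hqac : ∀ x y, p x * V x y = 0 → q x y = 0) :
    objective lam p V q =
      (1 - lam) * relEntropy (Function.uncurry q) (Function.uncurry (optimalJoint lam p V)) +
        lam * relEntropy (fun y => ∑ x, q x y) (fun y => ∑ x, optimalJoint lam p V x y) -
          log (partitionSum lam p V) := by
  have hterm : ∀ x y,
      q x y * log ((q x y / ∑ y', q x y') ^ (1 - lam) * (∑ x', q x' y) ^ lam / V x y) +
          (1 - lam) * (q x y * log ((∑ y', q x y') / p x)) +
          q x y * log (partitionSum lam p V) =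
        (1 - lam) * (q x y * log (q x y / optimalJoint lam p V x y)) +
          lam * (q x y * log ((∑ x', q x' y) / ∑ x', optimalJoint lam p V x' y)) := by
    intro x y
    rcases (hq0 x y).eq_or_lt with hq | hq
    · simp [← hq]
    obtain ⟨hpx, hVxy⟩ := pos_of_absCont hp hV hqac hq.ne'
    have hqX : 0 < ∑ y', q x y' :=
      hq.trans_le (single_le_sum (fun y' _ => hq0 x y') (mem_univ y))
    have hqY : 0 < ∑ x', q x' y :=
      hq.trans_le (single_le_sum (fun x' _ => hq0 x' y) (mem_univ x))
    have hZ : 0 < tiltedMass lam p V y :=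
      (tiltedWeight_pos hpx hVxy).trans_le (tiltedWeight_le_tiltedMass hp hV x y)
    rw [sum_optimalJoint_fst hlam hp hV, optimalJoint, tiltedWeight]
    linear_combination q x y * log_tilted_decomposition hlam hq hqX hqY hpx hVxy hZ hS
  have hmarginal : ∀ f : Y → ℝ, ∑ x, ∑ y, q x y * f y = ∑ y, (∑ x, q x y) * f y := by
    intro f
    rw [sum_comm]
    simp only [sum_mul]
  calc objective lam p V q
      = ∑ x, ∑ y,
          (q x y * log ((q x y / ∑ y', q x y') ^ (1 - lam) * (∑ x', q x' y) ^ lam / V x y) +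
            (1 - lam) * (q x y * log ((∑ y', q x y') / p x)) +
            q x y * log (partitionSum lam p V)) -
          log (partitionSum lam p V) := by
        simp only [objective, sum_add_distrib, ← mul_sum, ← sum_mul, hq1]
        ring
    _ = _ := by
        simp only [hterm, sum_add_distrib, ← mul_sum, hmarginal, relEntropy,
          Fintype.sum_prod_type, Function.uncurry_apply_pair]

theorem neg_log_partitionSum_le_objective (hlam : lam ∈ Set.Ico (0 : ℝ) 1)
    (hp : ∀ x, 0 ≤ p x) (hV : ∀ x y, 0 ≤ V x y) (hS : 0 < partitionSum lam p V)
    {q : X → Y → ℝ} (hq0 : ∀ x y, 0 ≤ q x y) (hq1 : ∑ x, ∑ y, q x y = 1)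
    (hqac : ∀ x y, p x * V x y = 0 → q x y = 0) :
    -log (partitionSum lam p V) ≤ objective lam p V q := by
  obtain ⟨hlam0, hlam1⟩ := hlam
  have hq_of_opt : ∀ x y, optimalJoint lam p V x y = 0 → q x y = 0 := fun x y h => by
    by_contra hq
    obtain ⟨hpx, hVxy⟩ := pos_of_absCont hp hV hqac hq
    exact (optimalJoint_pos hp hV hS hpx hVxy).ne' h
  have hjoint : 0 ≤ relEntropy (Function.uncurry q) (Function.uncurry (optimalJoint lam p V)) :=
    relEntropy_nonneg (fun i => hq0 i.1 i.2) (fun i => optimalJoint_nonneg hp hV hS i.1 i.2)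
      (fun i => hq_of_opt i.1 i.2) <| by
        simp only [Fintype.sum_prod_type, Function.uncurry_apply_pair, hq1,
          sum_optimalJoint hlam1.ne hp hV hS, le_refl]
  have hmarginal :
      0 ≤ relEntropy (fun y => ∑ x, q x y) (fun y => ∑ x, optimalJoint lam p V x y) := by
    refine relEntropy_nonneg (fun y => sum_nonneg fun x _ => hq0 x y)
      (fun y => sum_nonneg fun x _ => optimalJoint_nonneg hp hV hS x y) (fun y h => ?_) ?_
    · rw [sum_eq_zero_iff_of_nonneg fun x _ => optimalJoint_nonneg hp hV hS x y] at h
      exact sum_eq_zero fun x hx => hq_of_opt x y (h x hx)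
    · rw [sum_comm, sum_optimalJoint hlam1.ne hp hV hS, sum_comm, hq1]
  rw [objective_eq hlam1.ne hp hV hS hq0 hq1 hqac]
  have := mul_nonneg (sub_nonneg.2 hlam1.le) hjoint
  have := mul_nonneg hlam0 hmarginal
  linarith

theorem objective_optimalJoint (hlam : lam ≠ 1) (hp : ∀ x, 0 ≤ p x)
    (hV : ∀ x y, 0 ≤ V x y) (hS : 0 < partitionSum lam p V) :
    objective lam p V (optimalJoint lam p V) = -log (partitionSum lam p V) := by
  have hac : ∀ x y, p x * V x y = 0 → optimalJoint lam p V x y = 0 := fun x y h => by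
    rcases mul_eq_zero.1 h with h | h
    · simp [optimalJoint, tiltedWeight, h]
    · simp [optimalJoint, tiltedWeight, h, sub_ne_zero.2 hlam.symm]
  rw [objective_eq hlam hp hV hS (optimalJoint_nonneg hp hV hS)
    (sum_optimalJoint hlam hp hV hS) hac, relEntropy_self, relEntropy_self]
  ring

end TiltedChannel

open TiltedChannel in
theorem stmt_1_general {X Y : Type*} [Fintype X] [Fintype Y]
    (W : X → Y → ℝ) (hW0 : ∀ x y, 0 ≤ W x y)
    (c : X → ℝ)
    (lam : ℝ) (hlam : lam ∈ Set.Ico (0 : ℝ) 1) (nu : ℝ)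
    (p : X → ℝ) (hp0 : ∀ x, 0 ≤ p x)
    (hpos : ∃ x y, 0 < p x * W x y) :
    let g : X → Y → ℝ := fun x y =>
      p x * (W x y * Real.exp (-(lam * nu * c x))) ^ ((1 : ℝ) / (1 - lam))
    let Z : Y → ℝ := fun y => ∑ x, g x y
    let E0 : ℝ := - Real.log (∑ y, (Z y) ^ (1 - lam))
    let J : (X → Y → ℝ) → ℝ := fun q =>
      (∑ x, ∑ y, q x y *
          Real.log ((q x y / (∑ y', q x y')) ^ (1 - lam) * (∑ x', q x' y) ^ lam /
            (W x y * Real.exp (-(lam * nu * c x))))) +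
        (1 - lam) * ∑ x, (∑ y, q x y) * Real.log ((∑ y, q x y) / p x)
    let qstar : X → Y → ℝ := fun x y =>
      g x y * (Z y) ^ (-lam) / (∑ y', (Z y') ^ (1 - lam))
    (∀ q : X → Y → ℝ, (∀ x y, 0 ≤ q x y) → (∑ x, ∑ y, q x y) = 1 →
        (∀ x y, p x * W x y = 0 → q x y = 0) → E0 ≤ J q) ∧
      J qstar = E0 := by
  intro g Z E0 J qstar
  let V : X → Y → ℝ := fun x y => W x y * Real.exp (-(lam * nu * c x))
  have hV : ∀ x y, 0 ≤ V x y := fun x y => mul_nonneg (hW0 x y) (exp_pos _).le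
  have hS : 0 < partitionSum lam p V := by
    obtain ⟨x, y, hpW⟩ := hpos
    exact partitionSum_pos hp0 hV ((hp0 x).lt_of_ne' (left_ne_zero_of_mul hpW.ne'))
      (mul_pos ((hW0 x y).lt_of_ne' (right_ne_zero_of_mul hpW.ne')) (exp_pos _))
  refine ⟨fun q hq0 hq1 hqac => neg_log_partitionSum_le_objective hlam hp0 hV hS hq0 hq1 ?_,
    objective_optimalJoint hlam.2.ne hp0 hV hS⟩
  intro x y h
  have h' : p x * W x y * exp (-(lam * nu * c x)) = 0 := by rw [mul_assoc]; exact h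
  exact hqac x y ((mul_eq_zero.1 h').resolve_right (exp_pos _).ne')

theorem stmt_1 {X Y : Type*} [Fintype X] [Fintype Y]
    (W : X → Y → ℝ) (hW0 : ∀ x y, 0 ≤ W x y) (hW1 : ∀ x, ∑ y, W x y = 1)
    (c : X → ℝ) (hc : ∀ x, 0 ≤ c x)
    (lam : ℝ) (hlam : lam ∈ Set.Ico (0 : ℝ) 1) (nu : ℝ) (hnu : 0 ≤ nu)
    (p : X → ℝ) (hp0 : ∀ x, 0 ≤ p x) (hp1 : ∑ x, p x = 1)
    (hpos : ∃ x y, 0 < p x * W x y) :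
    let g : X → Y → ℝ := fun x y =>
      p x * (W x y * Real.exp (-(lam * nu * c x))) ^ ((1 : ℝ) / (1 - lam))
    let Z : Y → ℝ := fun y => ∑ x, g x y
    let E0 : ℝ := - Real.log (∑ y, (Z y) ^ (1 - lam))
    let J : (X → Y → ℝ) → ℝ := fun q =>
      (∑ x, ∑ y, q x y *
          Real.log ((q x y / (∑ y', q x y')) ^ (1 - lam) * (∑ x', q x' y) ^ lam /
            (W x y * Real.exp (-(lam * nu * c x))))) +
        (1 - lam) * ∑ x, (∑ y, q x y) * Real.log ((∑ y, q x y) / p x)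
    let qstar : X → Y → ℝ := fun x y =>
      g x y * (Z y) ^ (-lam) / (∑ y', (Z y') ^ (1 - lam))
    (∀ q : X → Y → ℝ, (∀ x y, 0 ≤ q x y) → (∑ x, ∑ y, q x y) = 1 →
        (∀ x y, p x * W x y = 0 → q x y = 0) → E0 ≤ J q) ∧
      J qstar = E0 :=
  stmt_1_general W hW0 c lam hlam nu p hp0 hpos
end

section
/- Let X, Y be finite sets, W a channel from X to Y, c : X → [0,∞), ρ ∈ [−1,0)∪(0,1], ν ≥ 0. With F_AR(p_X, p̂_{X|Y}) = −(1/ρ) log Σ_{x,y} p_X(x)^{1+ρ} p̂_{X|Y}(x|y)^{−ρ} W(y|x) e^{ρν c(x)}: for any fixed conditional distribution p̂_{X|Y} with positive entries, max over probability mass functions p_X of F_AR(p_X, p̂_{X|Y}) equals (1/ρ) A^{(ρ,ν)}(p̂_{X|Y}|W), where A^{(ρ,ν)}(p̂_{X|Y}|W) = ρ log Σ_x e^{−ν c(x)} [ Σ_y p̂_{X|Y}(x|y)^{−ρ} W(y|x) ]^{−1/ρ}, and the maximum is attained at p_X(x) proportional to [ Σ_y p̂_{X|Y}(x|y)^{−ρ}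 W(y|x) e^{ρν c(x)} ]^{−1/ρ}. -/
/-!
Put `g x = ∑ y, p̂(x|y)^(-ρ) W(y|x) e^(ρνc(x))`, `S = ∑ x, g x ^ (-1/ρ)` and
`q = g ^ (-1/ρ) / S`. Then `g = S ^ (-ρ) q ^ (-ρ)`, so that
`F_AR(p) = log S - (1/ρ) log ∑ x, p x ^ (1+ρ) q x ^ (-ρ) = log S - D_{1+ρ}(p ‖ q)`,
where `D_α` is the Rényi divergence, and `(1/ρ) A = log S`. For `1 + ρ ≥ 0` the Rényi divergence
is nonnegative (termwise weighted AM-GM if `1 + ρ ≤ 1`, Bernoulli's inequality if `1 + ρ ≥ 1`)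
and vanishes at `p = q`.
-/

open Finset Real

lemma add_mul_le_rpow_mul_rpow_one_sub {a b α : ℝ} (ha : 0 ≤ a) (hb : 0 < b) (hα : 1 ≤ α) :
    α * a + (1 - α) * b ≤ a ^ α * b ^ (1 - α) := by
  have bernoulli := one_add_mul_self_le_rpow_one_add
    (by linarith [div_nonneg ha hb.le] : -1 ≤ a / b - 1) hα
  rw [add_sub_cancel, div_rpow ha hb.le] at bernoulli
  calc α * a + (1 - α) * b = b * (1 + α * (a / b - 1)) := by field_simp; ring
    _ ≤ b * (a ^ α / b ^ α) := by gcongr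
    _ = a ^ α * b ^ (1 - α) := by rw [rpow_sub hb, rpow_one]; ring

section Renyi

variable {X : Type*} [Fintype X] {p q : X → ℝ}

lemma sum_rpow_mul_rpow_one_sub_le_one (hp : ∀ x, 0 ≤ p x) (hq : ∀ x, 0 ≤ q x)
    (hp1 : ∑ x, p x = 1) (hq1 : ∑ x, q x = 1) {α : ℝ} (hα0 : 0 ≤ α) (hα1 : α ≤ 1) :
    ∑ x, p x ^ α * q x ^ (1 - α) ≤ 1 :=
  calc ∑ x, p x ^ α * q x ^ (1 - α) ≤ ∑ x, (α * p x + (1 - α) * q x) :=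
        sum_le_sum fun x _ =>
          geom_mean_le_arith_mean2_weighted hα0 (by linarith) (hp x) (hq x) (by ring)
    _ = 1 := by rw [sum_add_distrib, ← mul_sum, ← mul_sum, hp1, hq1]; ring

lemma one_le_sum_rpow_mul_rpow_one_sub (hp : ∀ x, 0 ≤ p x) (hq : ∀ x, 0 < q x)
    (hp1 : ∑ x, p x = 1) (hq1 : ∑ x, q x = 1) {α : ℝ} (hα : 1 ≤ α) :
    1 ≤ ∑ x, p x ^ α * q x ^ (1 - α) :=
  calc 1 = ∑ x, (α * p x + (1 - α) * q x) := by
        rw [sum_add_distrib, ← mul_sum, ← mul_sum, hp1, hq1]; ring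
    _ ≤ ∑ x, p x ^ α * q x ^ (1 - α) :=
        sum_le_sum fun x _ => add_mul_le_rpow_mul_rpow_one_sub (hp x) (hq x) hα

lemma sum_rpow_mul_rpow_pos (hp : ∀ x, 0 ≤ p x) (hq : ∀ x, 0 < q x) (hp1 : ∑ x, p x = 1)
    (α β : ℝ) : 0 < ∑ x, p x ^ α * q x ^ β := by
  obtain ⟨x, -, hx⟩ := exists_ne_zero_of_sum_ne_zero (hp1.trans_ne one_ne_zero)
  exact sum_pos' (fun x _ => by have := hp x; have := hq x; positivity)
    ⟨x, mem_univ x, by have := (hp x).lt_of_ne' hx; have := hq x; positivity⟩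

lemma log_sum_rpow_mul_rpow_neg_div_nonneg (hp : ∀ x, 0 ≤ p x) (hq : ∀ x, 0 < q x)
    (hp1 : ∑ x, p x = 1) (hq1 : ∑ x, q x = 1) {ρ : ℝ} (hρ : -1 ≤ ρ) :
    0 ≤ log (∑ x, p x ^ (1 + ρ) * q x ^ (-ρ)) / ρ := by
  have hexp : 1 - (1 + ρ) = -ρ := by ring
  rcases le_or_gt ρ 0 with hneg | hpos
  · refine div_nonneg_of_nonpos (log_nonpos (sum_nonneg fun x _ => ?_) ?_) hneg
    · have := hp x; have := hq x; positivity
    · simpa only [hexp] using sum_rpow_mul_rpow_one_sub_le_one hp (fun x => (hq x).le) hp1 hq1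
        (by linarith : 0 ≤ 1 + ρ) (by linarith)
  · refine div_nonneg (log_nonneg ?_) hpos.le
    simpa only [hexp] using one_le_sum_rpow_mul_rpow_one_sub hp hq hp1 hq1
      (by linarith : 1 ≤ 1 + ρ)

end Renyi

section Arimoto

variable {X : Type*} [Fintype X] (ρ : ℝ) (g : X → ℝ)

noncomputable def arimotoObjective (p : X → ℝ) : ℝ := -(1 / ρ) * log (∑ x, p x ^ (1 + ρ) * g x)

noncomputable def arimotoMaximizer (x : X) : ℝ := g x ^ (-(1 : ℝ) / ρ) / ∑ x', g x' ^ (-(1 : ℝ) / ρ)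

variable {ρ g}

lemma sum_rpow_pos [Nonempty X] (hg : ∀ x, 0 < g x) (r : ℝ) : 0 < ∑ x, g x ^ r :=
  sum_pos (fun x _ => rpow_pos_of_pos (hg x) r) univ_nonempty

lemma arimotoMaximizer_pos [Nonempty X] (hg : ∀ x, 0 < g x) (x : X) :
    0 < arimotoMaximizer ρ g x :=
  div_pos (rpow_pos_of_pos (hg x) _) (sum_rpow_pos hg _)

lemma sum_arimotoMaximizer [Nonempty X] (hg : ∀ x, 0 < g x) :
    ∑ x, arimotoMaximizer ρ g x = 1 := by
  unfold arimotoMaximizer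
  rw [← sum_div, div_self (sum_rpow_pos hg _).ne']

lemma arimotoMaximizer_rpow_neg [Nonempty X] (hρ : ρ ≠ 0) (hg : ∀ x, 0 < g x) (x : X) :
    arimotoMaximizer ρ g x ^ (-ρ) = g x / (∑ x', g x' ^ (-(1 : ℝ) / ρ)) ^ (-ρ) := by
  rw [arimotoMaximizer, div_rpow (rpow_nonneg (hg x).le _) (sum_rpow_pos hg _).le,
    ← rpow_mul (hg x).le, show -(1 : ℝ) / ρ * -ρ = 1 by field_simp, rpow_one]

lemma arimotoObjective_eq [Nonempty X] (hρ : ρ ≠ 0) (hg : ∀ x, 0 < g x) {p : X → ℝ}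
    (hD : ∑ x, p x ^ (1 + ρ) * arimotoMaximizer ρ g x ^ (-ρ) ≠ 0) :
    arimotoObjective ρ g p = log (∑ x, g x ^ (-(1 : ℝ) / ρ)) -
      log (∑ x, p x ^ (1 + ρ) * arimotoMaximizer ρ g x ^ (-ρ)) / ρ := by
  have hS := sum_rpow_pos hg (-(1 : ℝ) / ρ)
  have hSρ := (rpow_pos_of_pos hS (-ρ)).ne'
  have hfactor : ∑ x, p x ^ (1 + ρ) * g x = (∑ x, g x ^ (-(1 : ℝ) / ρ)) ^ (-ρ) *
      ∑ x, p x ^ (1 + ρ) * arimotoMaximizer ρ g x ^ (-ρ) := by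
    simp_rw [arimotoMaximizer_rpow_neg hρ hg, mul_sum, mul_div_assoc', mul_div_cancel_left₀ _ hSρ]
  rw [arimotoObjective, hfactor, log_mul hSρ hD, log_rpow hS]
  field_simp
  ring

theorem arimotoObjective_le (hρ : -1 ≤ ρ) (hρ0 : ρ ≠ 0) (hg : ∀ x, 0 < g x) {p : X → ℝ}
    (hp : ∀ x, 0 ≤ p x) (hp1 : ∑ x, p x = 1) :
    arimotoObjective ρ g p ≤ log (∑ x, g x ^ (-(1 : ℝ) / ρ)) := by
  obtain ⟨x₀, -, -⟩ := exists_ne_zero_of_sum_ne_zero (hp1.trans_ne one_ne_zero)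
  have : Nonempty X := ⟨x₀⟩
  have hq := arimotoMaximizer_pos (ρ := ρ) hg
  rw [arimotoObjective_eq hρ0 hg (sum_rpow_mul_rpow_pos hp hq hp1 _ _).ne']
  linarith [log_sum_rpow_mul_rpow_neg_div_nonneg hp hq hp1 (sum_arimotoMaximizer hg) hρ]

theorem arimotoObjective_arimotoMaximizer (hρ0 : ρ ≠ 0) (hg : ∀ x, 0 < g x) :
    arimotoObjective ρ g (arimotoMaximizer ρ g) = log (∑ x, g x ^ (-(1 : ℝ) / ρ)) := by
  rcases isEmpty_or_nonempty X with hX | hX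
  · simp [arimotoObjective]
  have hself : ∑ x, arimotoMaximizer ρ g x ^ (1 + ρ) * arimotoMaximizer ρ g x ^ (-ρ) = 1 := by
    simp_rw [← rpow_add (arimotoMaximizer_pos hg _), add_neg_cancel_right, rpow_one]
    exact sum_arimotoMaximizer hg
  rw [arimotoObjective_eq hρ0 hg (by rw [hself]; exact one_ne_zero), hself, log_one, zero_div, sub_zero]

end Arimoto

theorem stmt_4_general {X Y : Type*} [Fintype X] [Fintype Y]
    (W : X → Y → ℝ) (hW0 : ∀ x y, 0 ≤ W x y) (hW1 : ∀ x, ∑ y, W x y = 1)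
    (c : X → ℝ)
    (rho : ℝ) (hrho1 : -1 ≤ rho) (hrho3 : rho ≠ 0)
    (nu : ℝ)
    (phat : X → Y → ℝ) (hphat0 : ∀ x y, 0 < phat x y) :
    let FAR : (X → ℝ) → ℝ := fun p =>
      -(1 / rho) * Real.log (∑ x, ∑ y,
        (p x) ^ (1 + rho) * (phat x y) ^ (-rho) * W x y * Real.exp (rho * nu * c x))
    let A : ℝ := rho * Real.log (∑ x, Real.exp (-(nu * c x)) *
      (∑ y, (phat x y) ^ (-rho) * W x y) ^ (-(1 : ℝ) / rho))
    let pstar : X → ℝ := fun x =>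
      (∑ y, (phat x y) ^ (-rho) * W x y * Real.exp (rho * nu * c x)) ^ (-(1 : ℝ) / rho) /
        (∑ x', (∑ y, (phat x' y) ^ (-rho) * W x' y * Real.exp (rho * nu * c x')) ^ (-(1 : ℝ) / rho))
    (∀ p : X → ℝ, (∀ x, 0 ≤ p x) → ∑ x, p x = 1 → FAR p ≤ (1 / rho) * A) ∧
      FAR pstar = (1 / rho) * A := by
  intro FAR A pstar
  set g : X → ℝ := fun x => ∑ y, phat x y ^ (-rho) * W x y * exp (rho * nu * c x)
  have hg : ∀ x, 0 < g x := fun x => by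
    obtain ⟨y, -, hy⟩ := exists_ne_zero_of_sum_ne_zero ((hW1 x).trans_ne one_ne_zero)
    refine sum_pos' (fun y _ => by have := hW0 x y; have := hphat0 x y; positivity)
      ⟨y, mem_univ y, ?_⟩
    have := (hW0 x y).lt_of_ne' hy; have := hphat0 x y; positivity
  have hFAR : FAR = arimotoObjective rho g := by
    funext p
    simp only [FAR, arimotoObjective, g, mul_sum, mul_assoc]
  have hA : 1 / rho * A = log (∑ x, g x ^ (-(1 : ℝ) / rho)) := by
    have hterm : ∀ x, exp (-(nu * c x)) * (∑ y, phat x y ^ (-rho) * W x y) ^ (-(1 : ℝ) / rho) =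
        g x ^ (-(1 : ℝ) / rho) := fun x => by
      rw [show g x = (∑ y, phat x y ^ (-rho) * W x y) * exp (rho * nu * c x) from (sum_mul _ _ _).symm,
        
        mul_rpow (sum_nonneg fun y _ => by have := hW0 x y; have := hphat0 x y; positivity)
          (exp_pos _).le, ← exp_mul, show rho * nu * c x * (-(1 : ℝ) / rho) = -(nu * c x) by
            field_simp, mul_comm]
    simp only [A, hterm]
    field_simp
  rw [hFAR, hA]
  exact ⟨fun p hp hp1 => arimotoObjective_le hrho1 hrho3 hg hp hp1,
    arimotoObjective_arimotoMaximizer hrho3 hg⟩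

theorem stmt_4 {X Y : Type*} [Fintype X] [Fintype Y]
    (W : X → Y → ℝ) (hW0 : ∀ x y, 0 ≤ W x y) (hW1 : ∀ x, ∑ y, W x y = 1)
    (c : X → ℝ) (hc : ∀ x, 0 ≤ c x)
    (rho : ℝ) (hrho1 : -1 ≤ rho) (hrho2 : rho ≤ 1) (hrho3 : rho ≠ 0)
    (nu : ℝ) (hnu : 0 ≤ nu)
    (phat : X → Y → ℝ) (hphat0 : ∀ x y, 0 < phat x y)
    (hphat1 : ∀ y, ∑ x, phat x y = 1) :
    let FAR : (X → ℝ) → ℝ := fun p =>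
      -(1 / rho) * Real.log (∑ x, ∑ y,
        (p x) ^ (1 + rho) * (phat x y) ^ (-rho) * W x y * Real.exp (rho * nu * c x))
    let A : ℝ := rho * Real.log (∑ x, Real.exp (-(nu * c x)) *
      (∑ y, (phat x y) ^ (-rho) * W x y) ^ (-(1 : ℝ) / rho))
    let pstar : X → ℝ := fun x =>
      (∑ y, (phat x y) ^ (-rho) * W x y * Real.exp (rho * nu * c x)) ^ (-(1 : ℝ) / rho) /
        (∑ x', (∑ y, (phat x' y) ^ (-rho) * W x' y * Real.exp (rho * nu * c x')) ^ (-(1 : ℝ) / rho))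
    (∀ p : X → ℝ, (∀ x, 0 ≤ p x) → ∑ x, p x = 1 → FAR p ≤ (1 / rho) * A) ∧
      FAR pstar = (1 / rho) * A :=
  stmt_4_general W hW0 hW1 c rho hrho1 hrho3 nu phat hphat0
end

section
/- Let X, Y be finite sets, W a channel, c a cost function, ρ ∈ (−1,0)∪(0,1], ν ≥ 0, p_X a pmf on X with positive entries, and p̂_{X|Y} a conditional pmf with positive entries. Define p̂*_{X|Y}(x|y) = p_X(x)(W(y|x)e^{ρν c(x)})^{1/(1+ρ)} / Σ_{x'} p_X(x')(W(y|x')e^{ρν c(x')})^{1/(1+ρ)} and p̂*_Y(y) = ( Σ_x p_X(x)(W(y|x)e^{ρν c(x)})^{1/(1+ρ)} )^{1+ρ} / Σ_{y'} ( Σ_x p_X(x)(W(y'|x)e^{ρν c(x)})^{1/(1+ρ)} )^{1+ρ}. Then F_AR^{(ρ,ν)}(p_X, p̂_{X|Y}|W) = (1/ρ) E_0^{(ρ,ν)}(p_X|W) − D_{1+ρ}( p̂*_{X|Y} ‖ p̂_{X|Y} | p̂*_Y ), where D_{1+ρ}(p_{X|Y} ‖ q_{X|Y} | p_Y) = (1/ρ)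 log Σ_y p_Y(y) Σ_x p_{X|Y}(x|y)^{1+ρ} q_{X|Y}(x|y)^{−ρ} is the conditional Rényi divergence of order 1+ρ. -/
open Finset Real

theorem stmt_5 {X Y : Type*} [Fintype X] [Fintype Y]
    (W : X → Y → ℝ) (hW0 : ∀ x y, 0 ≤ W x y) (hW1 : ∀ x, ∑ y, W x y = 1)
    (c : X → ℝ) (hc : ∀ x, 0 ≤ c x)
    (rho : ℝ) (hrho1 : -1 < rho) (hrho2 : rho ≤ 1) (hrho3 : rho ≠ 0)
    (nu : ℝ) (hnu : 0 ≤ nu)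
    (p : X → ℝ) (hp0 : ∀ x, 0 < p x) (hp1 : ∑ x, p x = 1)
    (phat : X → Y → ℝ) (hphat0 : ∀ x y, 0 < phat x y)
    (hphat1 : ∀ y, ∑ x, phat x y = 1) :
    let FAR : ℝ := -(1 / rho) * Real.log (∑ x, ∑ y,
      (p x) ^ (1 + rho) * (phat x y) ^ (-rho) * W x y * Real.exp (rho * nu * c x))
    let E0 : ℝ := - Real.log (∑ y,
      (∑ x, p x * (W x y * Real.exp (rho * nu * c x)) ^ ((1 : ℝ) / (1 + rho))) ^ (1 + rho))
    let phatstar : X → Y → ℝ := fun x y =>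
      p x * (W x y * Real.exp (rho * nu * c x)) ^ ((1 : ℝ) / (1 + rho)) /
        (∑ x', p x' * (W x' y * Real.exp (rho * nu * c x')) ^ ((1 : ℝ) / (1 + rho)))
    let phatYstar : Y → ℝ := fun y =>
      (∑ x, p x * (W x y * Real.exp (rho * nu * c x)) ^ ((1 : ℝ) / (1 + rho))) ^ (1 + rho) /
        (∑ y', (∑ x, p x * (W x y' * Real.exp (rho * nu * c x)) ^ ((1 : ℝ) / (1 + rho))) ^ (1 + rho))
    let condRenyi : ℝ := (1 / rho) * Real.log (∑ y, phatYstar y *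
      ∑ x, (phatstar x y) ^ (1 + rho) * (phat x y) ^ (-rho))
    FAR = (1 / rho) * E0 - condRenyi := by
  intro FAR E0 phatstar phatYstar condRenyi
  have h1r : (0:ℝ) < 1 + rho := by linarith
  have h1r' : (1:ℝ) + rho ≠ 0 := ne_of_gt h1r
  set k : X → Y → ℝ := fun x y =>
    (W x y * Real.exp (rho * nu * c x)) ^ ((1:ℝ)/(1+rho)) with hk
  have hk0 : ∀ x y, 0 ≤ k x y := fun x y =>
    Real.rpow_nonneg (mul_nonneg (hW0 x y) (Real.exp_pos _).le) _
  set A : Y → ℝ := fun y => ∑ x, p x * k x y with hA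
  have hA0 : ∀ y, 0 ≤ A y := fun y =>
    Finset.sum_nonneg fun x _ => mul_nonneg (hp0 x).le (hk0 x y)
  set T : ℝ := ∑ y, A y ^ (1 + rho) with hT
  set B : Y → ℝ := fun y =>
    ∑ x, p x ^ (1+rho) * phat x y ^ (-rho) * W x y * Real.exp (rho*nu*c x) with hB
  have hXne : Nonempty X := by
    by_contra h
    rw [not_nonempty_iff] at h
    rw [Finset.univ_eq_empty, Finset.sum_empty] at hp1
    exact one_ne_zero hp1.symm
  obtain ⟨x0⟩ := hXne
  have hy0 : ∃ y0, 0 < W x0 y0 := by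
    by_contra h
    push_neg at h
    have hz : ∀ y, W x0 y = 0 := fun y => le_antisymm (h y) (hW0 x0 y)
    have := hW1 x0
    rw [Finset.sum_congr rfl (fun y _ => hz y), Finset.sum_const, smul_zero] at this
    exact one_ne_zero this.symm
  obtain ⟨y0, hy0⟩ := hy0
  have hBnn : ∀ y, 0 ≤ B y := fun y =>
    Finset.sum_nonneg fun x _ => mul_nonneg (mul_nonneg (mul_nonneg
      (Real.rpow_nonneg (hp0 x).le _) (Real.rpow_nonneg (hphat0 x y).le _))
      (hW0 x y)) (Real.exp_pos _).le
  have hBy0 : 0 < B y0 := by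
    apply Finset.sum_pos' (fun x _ => mul_nonneg (mul_nonneg (mul_nonneg
      (Real.rpow_nonneg (hp0 x).le _) (Real.rpow_nonneg (hphat0 x y0).le _))
      (hW0 x y0)) (Real.exp_pos _).le)
    exact ⟨x0, Finset.mem_univ _,
      mul_pos (mul_pos (mul_pos (Real.rpow_pos_of_pos (hp0 x0) _)
        (Real.rpow_pos_of_pos (hphat0 x0 y0) _)) hy0) (Real.exp_pos _)⟩
  set S : ℝ := ∑ y, B y with hS
  have hSpos : 0 < S :=
    Finset.sum_pos' (fun y _ => hBnn y) ⟨y0, Finset.mem_univ _, hBy0⟩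
  have hkx0y0 : 0 < k x0 y0 := Real.rpow_pos_of_pos (by positivity) _
  have hAy0 : 0 < A y0 :=
    Finset.sum_pos' (fun x _ => mul_nonneg (hp0 x).le (hk0 x y0))
      ⟨x0, Finset.mem_univ _, mul_pos (hp0 x0) hkx0y0⟩
  have hTpos : 0 < T :=
    Finset.sum_pos' (fun y _ => Real.rpow_nonneg (hA0 y) _)
      ⟨y0, Finset.mem_univ _, Real.rpow_pos_of_pos hAy0 _⟩
  -- key pointwise identity
  have hkey : ∀ y, phatYstar y *
      ∑ x, (phatstar x y) ^ (1 + rho) * (phat x y) ^ (-rho) = B y / T := by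
    intro y
    rcases eq_or_lt_of_le (hA0 y) with hAy | hAy
    · -- A y = 0 : all W x y = 0
      have hW0y : ∀ x, W x y = 0 := by
        intro x
        have hterm : p x * k x y = 0 :=
          (Finset.sum_eq_zero_iff_of_nonneg
            (fun x _ => mul_nonneg (hp0 x).le (hk0 x y))).1 hAy.symm x (Finset.mem_univ x)
        have hkxy : k x y = 0 := by
          rcases mul_eq_zero.1 hterm with h | h
          · exact absurd h (ne_of_gt (hp0 x))
          · exact h
        by_contra hWxy
        have hWpos : 0 < W x y * Real.exp (rho * nu * c x) := by
          have := lt_of_le_of_ne (hW0 x y) (Ne.symm hWxy)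
          positivity
        exact (ne_of_gt (Real.rpow_pos_of_pos hWpos _)) hkxy
      have hBy : B y = 0 := by
        rw [hB]
        exact Finset.sum_eq_zero fun x _ => by simp [hW0y x]
      have hps : phatYstar y = 0 := by
        show A y ^ (1+rho) / T = 0
        rw [← hAy, Real.zero_rpow h1r', zero_div]
      rw [hps, hBy, zero_mul, zero_div]
    · -- A y > 0
      have hApow : (0:ℝ) < A y ^ (1+rho) := Real.rpow_pos_of_pos hAy _
      have hinner : ∑ x, (phatstar x y) ^ (1 + rho) * (phat x y) ^ (-rho)
          = B y / A y ^ (1+rho) := by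
        rw [hB, Finset.sum_div]
        refine Finset.sum_congr rfl fun x _ => ?_
        have h1 : phatstar x y = p x * k x y / A y := rfl
        rw [h1, Real.div_rpow (mul_nonneg (hp0 x).le (hk0 x y)) (hA0 y),
          Real.mul_rpow (hp0 x).le (hk0 x y)]
        have h2 : k x y ^ (1+rho) = W x y * Real.exp (rho * nu * c x) := by
          rw [hk]
          rw [← Real.rpow_mul (mul_nonneg (hW0 x y) (Real.exp_pos _).le),
            one_div, inv_mul_cancel₀ h1r', Real.rpow_one]
        rw [h2]
        ring
      have h3 : phatYstar y = A y ^ (1+rho) / T := rfl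
      rw [hinner, h3]
      field_simp
  have hsum : (∑ y, phatYstar y *
      ∑ x, (phatstar x y) ^ (1 + rho) * (phat x y) ^ (-rho)) = S / T := by
    rw [Finset.sum_congr rfl fun y _ => hkey y, hS, Finset.sum_div]
  have hC : condRenyi = (1/rho) * Real.log (S / T) := by
    show (1/rho) * Real.log (∑ y, phatYstar y *
      ∑ x, (phatstar x y) ^ (1 + rho) * (phat x y) ^ (-rho)) = _
    rw [hsum]
  have hFAR : FAR = -(1/rho) * Real.log S := by
    show -(1/rho) * Real.log (∑ x, ∑ y,
      (p x) ^ (1 + rho) * (phat x y) ^ (-rho) * W x y * Real.exp (rho * nu * c x)) = _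
    rw [Finset.sum_comm]
  have hE0 : E0 = - Real.log T := rfl
  rw [hFAR, hE0, hC, Real.log_div (ne_of_gt hSpos) (ne_of_gt hTpos)]
  ring
end

section
/- Under the same setting, with p*_X(p̂_{X|Y})(x) = [ Σ_y p̂_{X|Y}(x|y)^{−ρ} W(y|x) e^{ρν c(x)} ]^{−1/ρ} / Σ_{x'} [ Σ_y p̂_{X|Y}(x'|y)^{−ρ} W(y|x') e^{ρν c(x')} ]^{−1/ρ}, we have F_AR^{(ρ,ν)}(p_X, p̂_{X|Y}|W) = (1/ρ) A^{(ρ,ν)}(p̂_{X|Y}|W) − D_{1+ρ}( p_X ‖ p*_X(p̂_{X|Y}) ), where D_{1+ρ}(p ‖ q) = (1/ρ) log Σ_x p(x)^{1+ρ} q(x)^{−ρ} is the Rényi divergence of order 1+ρ and A^{(ρ,ν)}(p̂_{X|Y}|W) = ρ log Σ_x e^{−ν c(x)} [ Σ_y p̂_{X|Y}(x|y)^{−ρ} W(y|x) ]^{−1/ρ}. -/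
/-!
Write `S x = e^{ρνc(x)} Σ_y p̂(x|y)^{-ρ} W(y|x)` and `Z = Σ_x S x^{-1/ρ}`. Then
`F_AR = -(1/ρ) log Σ_x p(x)^{1+ρ} S x` and `A = ρ log Z`, while `p* = S^{-1/ρ} / Z` gives
`p*(x)^{-ρ} = Z^ρ S x`, so the Rényi divergence splits as `log Z - F_AR`.
-/

open Finset Real

lemma sum_mul_pos_of_sum_eq_one {Y : Type*} [Fintype Y] {f w : Y → ℝ} (hf : ∀ y, 0 < f y)
    (hw0 : ∀ y, 0 ≤ w y) (hw1 : ∑ y, w y = 1) : 0 < ∑ y, f y * w y := by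
  obtain ⟨y, -, hy⟩ : ∃ y ∈ univ, (0 : ℝ) < w y :=
    exists_lt_of_sum_lt (by simp [hw1])
  exact sum_pos' (fun i _ => mul_nonneg (hf i).le (hw0 i)) ⟨y, mem_univ y, mul_pos (hf y) hy⟩

lemma exp_mul_mul_rpow_neg_one_div {ρ : ℝ} (hρ : ρ ≠ 0) (b : ℝ) {t : ℝ} (ht : 0 ≤ t) :
    (exp (ρ * b) * t) ^ (-1 / ρ) = exp (-b) * t ^ (-1 / ρ) := by
  rw [mul_rpow (exp_pos _).le ht, ← exp_mul]
  congr 2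
  field_simp

lemma div_rpow_neg_of_rpow_neg_one_div {ρ s Z : ℝ} (hρ : ρ ≠ 0) (hs : 0 ≤ s) (hZ : 0 ≤ Z) :
    (s ^ (-1 / ρ) / Z) ^ (-ρ) = s * Z ^ ρ := by
  have hinv : (-1 / ρ)⁻¹ = -ρ := by field_simp
  rw [div_rpow (rpow_nonneg hs _) hZ, ← hinv, rpow_rpow_inv hs (by simpa using hρ), hinv,
    rpow_neg hZ, div_inv_eq_mul]

lemma renyi_div_normalized_rpow {X : Type*} [Fintype X] [Nonempty X] {ρ : ℝ} (hρ : ρ ≠ 0)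
    {p S : X → ℝ} (hp : ∀ x, 0 < p x) (hS : ∀ x, 0 < S x) :
    (1 / ρ) * log (∑ x, p x ^ (1 + ρ) * (S x ^ (-1 / ρ) / ∑ x', S x' ^ (-1 / ρ)) ^ (-ρ)) =
      log (∑ x, S x ^ (-1 / ρ)) + (1 / ρ) * log (∑ x, p x ^ (1 + ρ) * S x) := by
  set Z := ∑ x, S x ^ (-1 / ρ)
  have hZ : 0 < Z := sum_pos (fun x _ => rpow_pos_of_pos (hS x) _) univ_nonempty
  have hE : 0 < ∑ x, p x ^ (1 + ρ) * S x :=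
    sum_pos (fun x _ => mul_pos (rpow_pos_of_pos (hp x) _) (hS x)) univ_nonempty
  have hsum : ∑ x, p x ^ (1 + ρ) * (S x ^ (-1 / ρ) / Z) ^ (-ρ) =
      Z ^ ρ * ∑ x, p x ^ (1 + ρ) * S x := by
    rw [mul_sum]
    refine sum_congr rfl fun x _ => ?_
    rw [div_rpow_neg_of_rpow_neg_one_div hρ (hS x).le hZ.le]
    ring
  rw [hsum, log_mul (rpow_pos_of_pos hZ _).ne' hE.ne', log_rpow hZ]
  field_simp

theorem stmt_6_general {X Y : Type*} [Fintype X] [Fintype Y]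
    (W : X → Y → ℝ) (hW0 : ∀ x y, 0 ≤ W x y) (hW1 : ∀ x, ∑ y, W x y = 1)
    (c : X → ℝ)
    (rho : ℝ) (hrho3 : rho ≠ 0)
    (nu : ℝ)
    (p : X → ℝ) (hp0 : ∀ x, 0 < p x) (hp1 : ∑ x, p x = 1)
    (phat : X → Y → ℝ) (hphat0 : ∀ x y, 0 < phat x y) :
    let FAR : ℝ := -(1 / rho) * Real.log (∑ x, ∑ y,
      (p x) ^ (1 + rho) * (phat x y) ^ (-rho) * W x y * Real.exp (rho * nu * c x))
    let A : ℝ := rho * Real.log (∑ x, Real.exp (-(nu * c x)) *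
      (∑ y, (phat x y) ^ (-rho) * W x y) ^ (-(1 : ℝ) / rho))
    let pstar : X → ℝ := fun x =>
      (∑ y, (phat x y) ^ (-rho) * W x y * Real.exp (rho * nu * c x)) ^ (-(1 : ℝ) / rho) /
        (∑ x', (∑ y, (phat x' y) ^ (-rho) * W x' y * Real.exp (rho * nu * c x')) ^ (-(1 : ℝ) / rho))
    let renyi : ℝ := (1 / rho) * Real.log (∑ x, (p x) ^ (1 + rho) * (pstar x) ^ (-rho))
    FAR = (1 / rho) * A - renyi := by
  intro FAR A pstar renyi
  have : Nonempty X := by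
    by_contra h
    simp [not_nonempty_iff.mp h] at hp1
  have hT : ∀ x, 0 < ∑ y, phat x y ^ (-rho) * W x y := fun x =>
    sum_mul_pos_of_sum_eq_one (fun y => rpow_pos_of_pos (hphat0 x y) _) (hW0 x) (hW1 x)
  set S : X → ℝ := fun x => exp (rho * nu * c x) * ∑ y, phat x y ^ (-rho) * W x y
  have hS : ∀ x, 0 < S x := fun x => mul_pos (exp_pos _) (hT x)
  have hS_eq : ∀ x, ∑ y, phat x y ^ (-rho) * W x y * exp (rho * nu * c x) = S x := fun x => by
    simp only [S, mul_sum]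
    exact sum_congr rfl fun y _ => by ring
  have hFAR_eq : ∀ x, ∑ y, p x ^ (1 + rho) * phat x y ^ (-rho) * W x y * exp (rho * nu * c x) =
      p x ^ (1 + rho) * S x := fun x => by
    rw [← hS_eq, mul_sum]
    exact sum_congr rfl fun y _ => by ring
  have hA_eq : ∀ x, exp (-(nu * c x)) * (∑ y, phat x y ^ (-rho) * W x y) ^ (-1 / rho) =
      S x ^ (-1 / rho) := fun x => by
    simp only [S, mul_assoc rho nu]
    exact (exp_mul_mul_rpow_neg_one_div hrho3 _ (hT x).le).symm
  simp only [FAR, A, renyi, pstar]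
  simp only [hS_eq, hFAR_eq, hA_eq]
  rw [renyi_div_normalized_rpow hrho3 hp0 hS]
  field_simp
  abel

theorem stmt_6 {X Y : Type*} [Fintype X] [Fintype Y]
    (W : X → Y → ℝ) (hW0 : ∀ x y, 0 ≤ W x y) (hW1 : ∀ x, ∑ y, W x y = 1)
    (c : X → ℝ) (hc : ∀ x, 0 ≤ c x)
    (rho : ℝ) (hrho1 : -1 < rho) (hrho2 : rho ≤ 1) (hrho3 : rho ≠ 0)
    (nu : ℝ) (hnu : 0 ≤ nu)
    (p : X → ℝ) (hp0 : ∀ x, 0 < p x) (hp1 : ∑ x, p x = 1)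
    (phat : X → Y → ℝ) (hphat0 : ∀ x y, 0 < phat x y)
    (hphat1 : ∀ y, ∑ x, phat x y = 1) :
    let FAR : ℝ := -(1 / rho) * Real.log (∑ x, ∑ y,
      (p x) ^ (1 + rho) * (phat x y) ^ (-rho) * W x y * Real.exp (rho * nu * c x))
    let A : ℝ := rho * Real.log (∑ x, Real.exp (-(nu * c x)) *
      (∑ y, (phat x y) ^ (-rho) * W x y) ^ (-(1 : ℝ) / rho))
    let pstar : X → ℝ := fun x =>
      (∑ y, (phat x y) ^ (-rho) * W x y * Real.exp (rho * nu * c x)) ^ (-(1 : ℝ) / rho) /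
        (∑ x', (∑ y, (phat x' y) ^ (-rho) * W x' y * Real.exp (rho * nu * c x')) ^ (-(1 : ℝ) / rho))
    let renyi : ℝ := (1 / rho) * Real.log (∑ x, (p x) ^ (1 + rho) * (pstar x) ^ (-rho))
    FAR = (1 / rho) * A - renyi :=
  stmt_6_general W hW0 hW1 c rho hrho3 nu p hp0 hp1 phat hphat0
end

section
/- Let X, Y be finite sets, W a channel from X to Y, c : X → [0,∞), and ν ≥ 0. For any pmf p_X on X with positive entries, lim_{ρ→0} (1/ρ) E_0^{(ρ,ν)}(p_X|W) = I(p_X, W) − ν E_{p_X}[c(X)], where E_0^{(ρ,ν)}(p_X|W) = − log Σ_y [ Σ_x p_X(x)(W(y|x)e^{ρν c(x)})^{1/(1+ρ)} ]^{1+ρ} and I(p_X, W) is the mutual information of the joint distribution p_X(x)W(y|x). -/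
/-!
Write `G(ρ) = ∑_y (∑_x p(x) (W(y|x) e^{ρνc(x)})^{1/(1+ρ)})^{1+ρ}`, so that `E₀ = -log G`.
At `ρ = 0` the inner sums are the output distribution `q(y) = ∑_x p(x) W(y|x)`, hence `G(0) = 1`
and `E₀(0) = 0`; the limit is therefore the derivative of `E₀` at `0`. Differentiating
`(∑_x …)^{1+ρ}` at `0` gives `∑_x p(x) W(y|x) (νc(x) - log W(y|x)) + q(y) log q(y)`, and summing
over `y` yields `ν 𝔼[c] - I(p, W)`.
-/

open Finset Real Filter Topology

lemma eventually_one_add_ne_zero : ∀ᶠ ρ : ℝ in 𝓝 0, 1 + ρ ≠ 0 := by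
  filter_upwards [eventually_ne_nhds (show (0 : ℝ) ≠ -1 by norm_num)] with ρ hρ
  contrapose! hρ
  linarith

lemma hasDerivAt_mul_exp_rpow_one_div_one_add {w : ℝ} (hw : 0 ≤ w) (a : ℝ) :
    HasDerivAt (fun ρ : ℝ => (w * exp (ρ * a)) ^ (1 / (1 + ρ))) (w * (a - log w)) 0 := by
  rcases hw.eq_or_lt with rfl | hw
  · refine (hasDerivAt_const (0 : ℝ) (0 : ℝ)).congr_of_eventuallyEq ?_ |>.congr_deriv (by simp)
    filter_upwards [eventually_one_add_ne_zero] with ρ hρ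
    simp [zero_rpow (inv_ne_zero hρ)]
  · have hbase : HasDerivAt (fun ρ : ℝ => w * exp (ρ * a)) (w * (exp (0 * a) * (1 * a))) 0 :=
      (((hasDerivAt_id 0).mul_const a).exp).const_mul w
    have hexp : HasDerivAt (fun ρ : ℝ => 1 / (1 + ρ)) (-1) 0 := by
      simpa [Pi.inv_def] using ((hasDerivAt_id (0 : ℝ)).const_add 1).inv (by norm_num)
    convert hbase.rpow hexp (by simpa using hw) using 1
    simp
    ring

lemma hasDerivAt_rpow_one_add {f : ℝ → ℝ} {f' : ℝ} (hf : HasDerivAt f f' 0) (h0 : 0 < f 0) :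
    HasDerivAt (fun ρ => f ρ ^ (1 + ρ)) (f' + f 0 * log (f 0)) 0 := by
  convert hf.rpow ((hasDerivAt_id' 0).const_add 1) h0 using 1
  simp

lemma hasDerivAt_sum_mul_rpow_one_add {X : Type*} [Fintype X] {p w : X → ℝ}
    (hp : ∀ x, 0 ≤ p x) (hw : ∀ x, 0 ≤ w x) (a : X → ℝ) :
    HasDerivAt (fun ρ : ℝ => (∑ x, p x * (w x * exp (ρ * a x)) ^ (1 / (1 + ρ))) ^ (1 + ρ))
      (∑ x, p x * (w x * (a x - log (w x))) + (∑ x, p x * w x) * log (∑ x, p x * w x)) 0 := by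
  have hsum : HasDerivAt (fun ρ : ℝ => ∑ x, p x * (w x * exp (ρ * a x)) ^ (1 / (1 + ρ)))
      (∑ x, p x * (w x * (a x - log (w x)))) 0 :=
    HasDerivAt.fun_sum fun x _ => (hasDerivAt_mul_exp_rpow_one_div_one_add (hw x) (a x)).const_mul _
  have hsum0 : ∑ x, p x * (w x * exp (0 * a x)) ^ (1 / (1 + 0 : ℝ)) = ∑ x, p x * w x := by simp
  rcases (sum_nonneg fun x _ => mul_nonneg (hp x) (hw x)).eq_or_lt with hq | hq
  -- `rpow` is not differentiable at base `0`, but here the function vanishes near `ρ = 0`.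
  · have hpw : ∀ x, p x * w x = 0 := fun x =>
      (sum_eq_zero_iff_of_nonneg fun x _ => mul_nonneg (hp x) (hw x)).mp hq.symm x (mem_univ x)
    have hterm : ∀ ρ : ℝ, 1 + ρ ≠ 0 → ∀ x, p x * (w x * exp (ρ * a x)) ^ (1 / (1 + ρ)) = 0 := by
      intro ρ hρ x
      rcases mul_eq_zero.mp (hpw x) with h | h <;> simp [h, zero_rpow (inv_ne_zero hρ)]
    refine (hasDerivAt_const (0 : ℝ) (0 : ℝ)).congr_of_eventuallyEq ?_ |>.congr_deriv ?_
    · filter_upwards [eventually_one_add_ne_zero] with ρ hρ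
      rw [sum_eq_zero fun x _ => hterm ρ hρ x, zero_rpow hρ]
    · rw [← hq, zero_mul, add_zero]
      exact (sum_eq_zero fun x _ => by rw [← mul_assoc, hpw x, zero_mul]).symm
  · simpa [hsum0] using hasDerivAt_rpow_one_add hsum (by simpa using hq)

lemma sum_sum_mul_eq_one {X Y : Type*} [Fintype X] [Fintype Y] {p : X → ℝ} {W : X → Y → ℝ}
    (hW : ∀ x, ∑ y, W x y = 1) (hp : ∑ x, p x = 1) :
    ∑ y, ∑ x, p x * W x y = 1 := by
  rw [sum_comm]
  simp only [← mul_sum, hW, mul_one, hp]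

lemma sum_sum_mul_mul_eq_mul_sum {X Y : Type*} [Fintype X] [Fintype Y] {W : X → Y → ℝ}
    (hW : ∀ x, ∑ y, W x y = 1) (p c : X → ℝ) (nu : ℝ) :
    ∑ y, ∑ x, p x * W x y * (nu * c x) = nu * ∑ x, p x * c x := by
  rw [sum_comm, mul_sum]
  refine sum_congr rfl fun x _ => ?_
  rw [← sum_mul, ← mul_sum, hW, mul_one]
  ring

lemma sum_sum_mul_log_div_sum {X Y : Type*} [Fintype X] [Fintype Y] {p : X → ℝ} {W : X → Y → ℝ}
    (hp : ∀ x, 0 ≤ p x) (hW : ∀ x y, 0 ≤ W x y) :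
    ∑ x, ∑ y, p x * W x y * log (W x y / ∑ x', p x' * W x' y) =
      ∑ y, ∑ x, p x * W x y * log (W x y) - ∑ y, (∑ x, p x * W x y) * log (∑ x, p x * W x y) := by
  have hterm : ∀ x y, p x * W x y * log (W x y / ∑ x', p x' * W x' y) =
      p x * W x y * log (W x y) - p x * W x y * log (∑ x', p x' * W x' y) := by
    intro x y
    rcases (mul_nonneg (hp x) (hW x y)).eq_or_lt with h | h
    · simp [← h]
    · have hq : p x * W x y ≤ ∑ x', p x' * W x' y :=
        single_le_sum (f := fun x' => p x' * W x' y) (fun x' _ => mul_nonneg (hp x') (hW x' y))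
          (mem_univ x)
      rw [log_div (pos_of_mul_pos_right h (hp x)).ne' (h.trans_le hq).ne', mul_sub]
  simp only [hterm, sum_sub_distrib, sum_mul]
  congr 1 <;> exact sum_comm

theorem stmt_7_general {X Y : Type*} [Fintype X] [Fintype Y]
    (W : X → Y → ℝ) (hW0 : ∀ x y, 0 ≤ W x y) (hW1 : ∀ x, ∑ y, W x y = 1)
    (c : X → ℝ) (nu : ℝ)
    (p : X → ℝ) (hp0 : ∀ x, 0 < p x) (hp1 : ∑ x, p x = 1) :
    Filter.Tendsto
      (fun rho : ℝ => (1 / rho) *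
        (- Real.log (∑ y,
          (∑ x, p x * (W x y * Real.exp (rho * nu * c x)) ^ ((1 : ℝ) / (1 + rho))) ^ (1 + rho))))
      (nhdsWithin 0 (Set.Ioi (-1 : ℝ) \ {0}))
      (nhds ((∑ x, ∑ y, p x * W x y * Real.log (W x y / ∑ x', p x' * W x' y)) -
        nu * ∑ x, p x * c x)) := by
  set g : ℝ → ℝ := fun ρ =>
    ∑ y, (∑ x, p x * (W x y * exp (ρ * nu * c x)) ^ (1 / (1 + ρ))) ^ (1 + ρ) with hg
  have hderiv : HasDerivAt g _ 0 := HasDerivAt.fun_sum (u := univ) fun y _ => by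
    simpa only [← mul_assoc] using
      hasDerivAt_sum_mul_rpow_one_add (fun x => (hp0 x).le) (fun x => hW0 x y) (fun x => nu * c x)
  have hg0 : g 0 = 1 := by
    simp only [hg, zero_mul, exp_zero, mul_one, add_zero, div_one, rpow_one]
    exact sum_sum_mul_eq_one hW1 hp1
  have hF := (hderiv.log (by rw [hg0]; norm_num)).neg
  rw [hasDerivAt_iff_tendsto_slope_zero] at hF
  convert hF.mono_left (nhdsWithin_mono 0 fun ρ (hρ : ρ ∈ Set.Ioi (-1) \ {0}) => hρ.2) using 2 with ρ
  · simp only [Pi.neg_apply, zero_add, hg0, log_one, neg_zero, sub_zero, smul_eq_mul]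
    simp only [hg, one_div]
  · rw [hg0, div_one, sum_sum_mul_log_div_sum (fun x => (hp0 x).le) hW0]
    simp only [mul_sub, sum_sub_distrib, sum_add_distrib, sum_sum_mul_mul_eq_mul_sum hW1]
    ring

theorem stmt_7 {X Y : Type*} [Fintype X] [Fintype Y]
    (W : X → Y → ℝ) (hW0 : ∀ x y, 0 ≤ W x y) (hW1 : ∀ x, ∑ y, W x y = 1)
    (c : X → ℝ) (hc : ∀ x, 0 ≤ c x) (nu : ℝ) (hnu : 0 ≤ nu)
    (p : X → ℝ) (hp0 : ∀ x, 0 < p x) (hp1 : ∑ x, p x = 1) :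
    Filter.Tendsto
      (fun rho : ℝ => (1 / rho) *
        (- Real.log (∑ y,
          (∑ x, p x * (W x y * Real.exp (rho * nu * c x)) ^ ((1 : ℝ) / (1 + rho))) ^ (1 + rho))))
      (nhdsWithin 0 (Set.Ioi (-1 : ℝ) \ {0}))
      (nhds ((∑ x, ∑ y, p x * W x y * Real.log (W x y / ∑ x', p x' * W x' y)) -
        nu * ∑ x, p x * c x)) :=
  stmt_7_general W hW0 hW1 c nu p hp0 hp1
end

section
/- Let X, Y be finite sets, P_X a pmf on X, d : X × Y → [0,∞) a distortion measure such that for every x there exists y with d(x,y)=0, and Δ ≥ 0, R ≥ 0. Define G_CK(R,Δ|P_X) = min over pmfs q_X of { D(q_X‖P_X) + |R(Δ|q_X) − R|⁺ } where R(Δ|q_X) = min over conditional distributions q_{Y|X} with E_{q_{XY}}[d(X,Y)] ≤ Δ of I(q_X, q_{Y|X}); and define G̃_CK(R,Δ|P_X) = min over joint pmfs q_{XY} with E_{q_{XY}}[d(X,Y)] ≤ Δ of { D(q_X‖P_X) + |I(q_X, q_{Y|X}) − R|⁺ }. Then G_CK(R,Δ|P_X) = G̃_CK(R,Δ|P_X).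 -/
open Finset Real

/-!
Minimising first over the test channel and then over the source distribution is the same as
minimising over the pair, because `t ↦ |t - R|⁺` is monotone and continuous and therefore commutes
with the infimum. Pairs `(q_X, q_{Y|X})` correspond to joint distributions `q_{XY} = q_X q_{Y|X}`,
and under this correspondence `I(q_X, q_{Y|X})` becomes the joint-form mutual information.
The elementary bound `a log (a / b) ≥ -b` for `a, b ≥ 0` (which survives the convention
`log 0 = 0`) bounds both information terms below by `-1`, so all the infima are genuine.
-/

lemma Real.neg_le_mul_log_div {a b : ℝ} (ha : 0 ≤ a) (hb : 0 ≤ b) : -b ≤ a * log (a / b) := by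
  rcases ha.eq_or_lt with rfl | ha
  · simpa using hb
  rcases hb.eq_or_lt with rfl | hb
  · simp
  have h := one_sub_inv_le_log_of_pos (div_pos ha hb)
  rw [inv_div] at h
  calc -b ≤ a * (1 - b / a) := by field_simp; linarith
    _ ≤ a * log (a / b) := mul_le_mul_of_nonneg_left h ha.le

theorem csInf_add_comp_csInf_eq {α β : Type*} {S : Set α} {T : α → Set β} {a : α → ℝ}
    {J : α → β → ℝ} {φ : ℝ → ℝ} (hφ : Monotone φ) (hφc : Continuous φ)
    (hφb : BddBelow (Set.range φ)) (ha : BddBelow (a '' S)) (hS : S.Nonempty)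
    (hT : ∀ x ∈ S, (T x).Nonempty) (hJ : ∀ x ∈ S, BddBelow {w | ∃ k ∈ T x, w = J x k}) :
    sInf {v | ∃ x ∈ S, v = a x + φ (sInf {w | ∃ k ∈ T x, w = J x k})} =
      sInf {v | ∃ x ∈ S, ∃ k ∈ T x, v = a x + φ (J x k)} := by
  obtain ⟨ca, hca⟩ := ha
  obtain ⟨cφ, hcφ⟩ := hφb
  have hbound : ∀ x ∈ S, ∀ t, ca + cφ ≤ a x + φ t := fun x hx t =>
    add_le_add (hca ⟨x, hx, rfl⟩) (hcφ ⟨t, rfl⟩)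
  have hJne : ∀ x ∈ S, {w | ∃ k ∈ T x, w = J x k}.Nonempty := fun x hx =>
    let ⟨k, hk⟩ := hT x hx; ⟨_, k, hk, rfl⟩
  have hA : BddBelow {v | ∃ x ∈ S, v = a x + φ (sInf {w | ∃ k ∈ T x, w = J x k})} :=
    ⟨ca + cφ, by rintro _ ⟨x, hx, rfl⟩; exact hbound x hx _⟩
  have hB : BddBelow {v | ∃ x ∈ S, ∃ k ∈ T x, v = a x + φ (J x k)} :=
    ⟨ca + cφ, by rintro _ ⟨x, hx, k, -, rfl⟩; exact hbound x hx _⟩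
  obtain ⟨x₀, hx₀⟩ := hS
  obtain ⟨k₀, hk₀⟩ := hT x₀ hx₀
  refine le_antisymm (le_csInf ⟨_, x₀, hx₀, k₀, hk₀, rfl⟩ ?_) (le_csInf ⟨_, x₀, hx₀, rfl⟩ ?_)
  · rintro _ ⟨x, hx, k, hk, rfl⟩
    calc _ ≤ a x + φ (sInf {w | ∃ k ∈ T x, w = J x k}) := csInf_le hA ⟨x, hx, rfl⟩
      _ ≤ a x + φ (J x k) := add_le_add_right (hφ (csInf_le (hJ x hx) ⟨k, hk, rfl⟩)) _
  · rintro _ ⟨x, hx, rfl⟩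
    rw [hφ.map_csInf_of_continuousAt hφc.continuousAt (hJne x hx) (hJ x hx), ← sub_le_iff_le_add']
    refine le_csInf ((hJne x hx).image φ) ?_
    rintro _ ⟨_, ⟨k, hk, rfl⟩, rfl⟩
    exact sub_le_iff_le_add'.2 (csInf_le hB ⟨x, hx, k, hk, rfl⟩)

noncomputable section Channel

variable {X Y : Type*} [Fintype Y]

def IsChannel (k : X → Y → ℝ) : Prop := (∀ x y, 0 ≤ k x y) ∧ ∀ x, ∑ y, k x y = 1

lemma exists_isChannel_marginal_mul_eq [Nonempty Y] {q : X → Y → ℝ} (hq : ∀ x y, 0 ≤ q x y) :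
    ∃ k : X → Y → ℝ, IsChannel k ∧ ∀ x y, (∑ y', q x y') * k x y = q x y := by
  classical
  have hq_eq_zero : ∀ x, ∑ y', q x y' = 0 → ∀ y, q x y = 0 := fun x hx y =>
    (sum_eq_zero_iff_of_nonneg fun y _ => hq x y).1 hx y (mem_univ y)
  refine ⟨fun x => if ∑ y', q x y' = 0 then Pi.single (Classical.arbitrary Y) 1
    else fun y => q x y / ∑ y', q x y', ⟨fun x y => ?_, fun x => ?_⟩, fun x y => ?_⟩ <;>
    by_cases h : ∑ y', q x y' = 0 <;> simp only [h, if_true, if_false]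
  · exact (Pi.single_nonneg (α := fun _ : Y => ℝ)).2 zero_le_one y
  · exact div_nonneg (hq x y) (sum_nonneg fun y _ => hq x y)
  · simp
  · rw [← sum_div, div_self h]
  · rw [zero_mul, hq_eq_zero x h]
  · exact mul_div_cancel₀ _ h

lemma exists_isChannel_forall_mul_eq_zero {d : X → Y → ℝ} (hd : ∀ x, ∃ y, d x y = 0) :
    ∃ k : X → Y → ℝ, IsChannel k ∧ ∀ x y, k x y * d x y = 0 := by
  classical
  choose y₀ hy₀ using hd
  refine ⟨fun x => Pi.single (y₀ x) 1, ⟨fun x y => ?_, fun x => by simp⟩, fun x y => ?_⟩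
  · exact (Pi.single_nonneg (α := fun _ : Y => ℝ)).2 zero_le_one y
  · dsimp only
    rcases eq_or_ne y (y₀ x) with rfl | hy
    · rw [hy₀, mul_zero]
    · rw [Pi.single_eq_of_ne hy, zero_mul]

variable [Fintype X]

def mutualInfo (p : X → ℝ) (k : X → Y → ℝ) : ℝ :=
  ∑ x, ∑ y, p x * k x y * log (k x y / ∑ x', p x' * k x' y)

def jointMutualInfo (q : X → Y → ℝ) : ℝ :=
  ∑ x, ∑ y, q x y * log (q x y / ((∑ y', q x y') * ∑ x', q x' y))

lemma neg_one_le_jointMutualInfo {q : X → Y → ℝ} (hq0 : ∀ x y, 0 ≤ q x y)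
    (hq1 : ∑ x, ∑ y, q x y = 1) : -1 ≤ jointMutualInfo q := by
  have hprod : ∑ x, ∑ y, (∑ y', q x y') * ∑ x', q x' y = 1 := by
    rw [← sum_mul_sum, hq1, sum_comm, hq1, one_mul]
  rw [← hprod, ← sum_neg_distrib]
  refine sum_le_sum fun x _ => ?_
  rw [← sum_neg_distrib]
  exact sum_le_sum fun y _ => neg_le_mul_log_div (hq0 x y)
    (mul_nonneg (sum_nonneg fun _ _ => hq0 _ _) (sum_nonneg fun _ _ => hq0 _ _))

lemma mutualInfo_eq_jointMutualInfo {p : X → ℝ} {k : X → Y → ℝ} (hk : ∀ x, ∑ y, k x y = 1) :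
    mutualInfo p k = jointMutualInfo fun x y => p x * k x y := by
  refine sum_congr rfl fun x _ => sum_congr rfl fun y _ => ?_
  rw [← mul_sum, hk, mul_one]
  rcases eq_or_ne (p x) 0 with hp | hp
  · simp [hp]
  · rw [mul_div_mul_left _ _ hp]

lemma neg_one_le_mutualInfo {p : X → ℝ} {k : X → Y → ℝ} (hp : p ∈ stdSimplex ℝ X)
    (hk : IsChannel k) : -1 ≤ mutualInfo p k := by
  rw [mutualInfo_eq_jointMutualInfo hk.2]
  refine neg_one_le_jointMutualInfo (fun x y => mul_nonneg (hp.1 x) (hk.1 x y)) ?_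
  simp_rw [← mul_sum, hk.2, mul_one]
  exact hp.2

lemma setOf_joint_eq_setOf_channel [Nonempty Y] (F : (X → ℝ) → ℝ → ℝ)
    (C : (X → Y → ℝ) → Prop) :
    {v | ∃ q : X → Y → ℝ, (∀ x y, 0 ≤ q x y) ∧ (∑ x, ∑ y, q x y = 1) ∧ C q ∧
        v = F (fun x => ∑ y, q x y) (jointMutualInfo q)} =
      {v | ∃ p ∈ stdSimplex ℝ X, ∃ k ∈ {k | IsChannel k ∧ C fun x y => p x * k x y},
        v = F p (mutualInfo p k)} := by
  ext v
  constructor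
  · rintro ⟨q, hq0, hq1, hC, rfl⟩
    obtain ⟨k, hk, hqk⟩ := exists_isChannel_marginal_mul_eq hq0
    have hq : (fun x y => (∑ y', q x y') * k x y) = q := funext₂ hqk
    refine ⟨_, ⟨fun x => sum_nonneg fun y _ => hq0 x y, hq1⟩, k, ⟨hk, by rwa [hq]⟩, ?_⟩
    rw [mutualInfo_eq_jointMutualInfo hk.2, hq]
  · rintro ⟨p, hp, k, ⟨hk, hC⟩, rfl⟩
    have hmarg : (fun x => ∑ y, p x * k x y) = p :=
      funext fun x => by rw [← mul_sum, hk.2, mul_one]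
    refine ⟨_, fun x y => mul_nonneg (hp.1 x) (hk.1 x y), ?_, hC, ?_⟩
    · simpa only [hmarg] using hp.2
    · rw [hmarg, mutualInfo_eq_jointMutualInfo hk.2]

end Channel

theorem stmt_12_general {X Y : Type*} [Fintype X] [Fintype Y] [Nonempty Y]
    (P : X → ℝ) (hP0 : ∀ x, 0 ≤ P x) (hP1 : ∑ x, P x = 1)
    (d : X → Y → ℝ) (hd : ∀ x, ∃ y, d x y = 0)
    (Δ R : ℝ) (hΔ : 0 ≤ Δ) :
    let KL : (X → ℝ) → ℝ := fun qX => ∑ x, qX x * Real.log (qX x / P x)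
    let I : (X → ℝ) → (X → Y → ℝ) → ℝ := fun qX k =>
      ∑ x, ∑ y, qX x * k x y * Real.log (k x y / ∑ x', qX x' * k x' y)
    let RD : (X → ℝ) → ℝ := fun qX => sInf {v | ∃ k : X → Y → ℝ,
      (∀ x y, 0 ≤ k x y) ∧ (∀ x, ∑ y, k x y = 1) ∧
      (∑ x, ∑ y, qX x * k x y * d x y) ≤ Δ ∧ v = I qX k}
    sInf {v | ∃ qX : X → ℝ, (∀ x, 0 ≤ qX x) ∧ (∑ x, qX x = 1) ∧
        v = KL qX + max (RD qX - R) 0} =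
      sInf {v | ∃ q : X → Y → ℝ, (∀ x y, 0 ≤ q x y) ∧ (∑ x, ∑ y, q x y = 1) ∧
        (∑ x, ∑ y, q x y * d x y) ≤ Δ ∧
        v = KL (fun x => ∑ y, q x y) +
          max ((∑ x, ∑ y, q x y *
            Real.log (q x y / ((∑ y', q x y') * (∑ x', q x' y)))) - R) 0} := by
  intro KL I RD
  obtain ⟨k₀, hk₀, hk₀d⟩ := exists_isChannel_forall_mul_eq_zero hd
  have hKL : ∀ p ∈ stdSimplex ℝ X, -1 ≤ KL p := fun p hp => by
    rw [← hP1, ← sum_neg_distrib]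
    exact sum_le_sum fun x _ => neg_le_mul_log_div (hp.1 x) (hP0 x)
  have hk₀Δ : ∀ p : X → ℝ, ∑ x, ∑ y, p x * k₀ x y * d x y ≤ Δ := fun p => by
    simp only [mul_assoc, hk₀d, mul_zero, sum_const_zero, hΔ]
  have hφ : Monotone fun t => max (t - R) 0 := fun _ _ h =>
    max_le_max (sub_le_sub_right h R) le_rfl
  have key := (csInf_add_comp_csInf_eq (S := stdSimplex ℝ X)
    (T := fun p => {k | IsChannel k ∧ ∑ x, ∑ y, p x * k x y * d x y ≤ Δ}) (a := KL)
    (J := mutualInfo) hφ (by fun_prop) ⟨0, by rintro _ ⟨t, rfl⟩; exact le_max_right _ _⟩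
    ⟨-1, by rintro _ ⟨p, hp, rfl⟩; exact hKL p hp⟩ ⟨P, hP0, hP1⟩
    (fun p _ => ⟨k₀, hk₀, hk₀Δ p⟩)
    (fun p hp => ⟨-1, by rintro _ ⟨k, hk, rfl⟩; exact neg_one_le_mutualInfo hp hk.1⟩)).trans
    (congrArg sInf (setOf_joint_eq_setOf_channel (fun p t => KL p + max (t - R) 0)
      fun q => ∑ x, ∑ y, q x y * d x y ≤ Δ)).symm
  simp only [stdSimplex, IsChannel, Set.mem_ofPred_eq, and_assoc] at key
  exact key

theorem stmt_12 {X Y : Type*} [Fintype X] [Fintype Y] [Nonempty X] [Nonempty Y]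
    (P : X → ℝ) (hP0 : ∀ x, 0 ≤ P x) (hP1 : ∑ x, P x = 1)
    (d : X → Y → ℝ) (hd0 : ∀ x y, 0 ≤ d x y) (hd : ∀ x, ∃ y, d x y = 0)
    (Δ R : ℝ) (hΔ : 0 ≤ Δ) (hR : 0 ≤ R) :
    let KL : (X → ℝ) → ℝ := fun qX => ∑ x, qX x * Real.log (qX x / P x)
    let I : (X → ℝ) → (X → Y → ℝ) → ℝ := fun qX k =>
      ∑ x, ∑ y, qX x * k x y * Real.log (k x y / ∑ x', qX x' * k x' y)
    let RD : (X → ℝ) → ℝ := fun qX => sInf {v | ∃ k : X → Y → ℝ,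
      (∀ x y, 0 ≤ k x y) ∧ (∀ x, ∑ y, k x y = 1) ∧
      (∑ x, ∑ y, qX x * k x y * d x y) ≤ Δ ∧ v = I qX k}
    sInf {v | ∃ qX : X → ℝ, (∀ x, 0 ≤ qX x) ∧ (∑ x, qX x = 1) ∧
        v = KL qX + max (RD qX - R) 0} =
      sInf {v | ∃ q : X → Y → ℝ, (∀ x y, 0 ≤ q x y) ∧ (∑ x, ∑ y, q x y = 1) ∧
        (∑ x, ∑ y, q x y * d x y) ≤ Δ ∧
        v = KL (fun x => ∑ y, q x y) +
          max ((∑ x, ∑ y, q x y *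
            Real.log (q x y / ((∑ y', q x y') * (∑ x', q x' y)))) - R) 0} :=
  stmt_12_general P hP0 hP1 d hd Δ R hΔ
end

section
/- Let X, Y be finite sets, P_X a pmf on X with positive entries, d : X × Y → [0,∞), λ ∈ [0,1), ν ≥ 0, and p_{Y|X} a conditional pmf with positive entries. Define J'_s(q_{XY}, p_{Y|X}) = E_{q_{XY}}[ log( q_Y(Y)^{1−λ} q_{X|Y}(X|Y) / ( P_X(X) e^{−λν d(X,Y)} p_{Y|X}(Y|X)^{1−λ} ) ) ]. Then the minimum of J'_s over joint pmfs q_{XY} equals −A_s^{(−λ,ν)}(p_{Y|X}|P_X) := −(1−λ) log Σ_y [ Σ_x P_X(x) e^{−λν d(x,y)} p_{Y|X}(y|x)^{1−λ} ]^{1/(1−λ)}, attained by q_{X|Y}(x|y) = P_X(x)e^{−λν d(x,y)}p_{Y|X}(y|x)^{1−λ} / Σ_{x'} P_X(x')e^{−λν d(x',y)}p_{Y|X}(y|x')^{1−λ} and q_Y(y) proportional to [ Σ_x P_X(x)e^{−λν d(x,y)}p_{Y|X}(y|x)^{1−λ} ]^{1/(1−λ)}. -/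
open Finset Real

/-- Gibbs-type term inequality: `a - b ≤ a * (log a - log b)`. -/
lemma gibbs_aux {a b : ℝ} (ha : 0 ≤ a) (hb : 0 ≤ b) (hab : b = 0 → a = 0) :
    a - b ≤ a * (Real.log a - Real.log b) := by
  rcases hb.eq_or_lt with hb0 | hb0
  · simp [hab hb0.symm, ← hb0]
  rcases ha.eq_or_lt with ha0 | ha0
  · simp only [← ha0, zero_mul]
    linarith
  · have h := Real.log_le_sub_one_of_pos (div_pos hb0 ha0)
    rw [Real.log_div hb0.ne' ha0.ne'] at h
    have h2 : 1 - b / a ≤ Real.log a - Real.log b := by linarith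
    calc a - b = a * (1 - b / a) := by field_simp
    _ ≤ a * (Real.log a - Real.log b) := by
        exact mul_le_mul_of_nonneg_left h2 ha0.le

/-- Per-term log decomposition. -/
lemma term_id {q qY w Uy Z lam : ℝ} (hq : 0 ≤ q) (hw : 0 < w) (hU : 0 < Uy)
    (hZ : 0 < Z) (hlam : lam < 1) (hqY : q ≤ qY) :
    q * Real.log (qY ^ (1 - lam) * (q / qY) / w)
      = q * (Real.log q - Real.log (qY * (w / Uy)))
        + (1 - lam) * (q * (Real.log qY - Real.log (Uy ^ ((1 : ℝ) / (1 - lam)) / Z)))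
        - q * ((1 - lam) * Real.log Z) := by
  have h1lam : (0:ℝ) < 1 - lam := by linarith
  rcases hq.eq_or_lt with h0 | h0
  · simp [← h0]
  · have hqY0 : 0 < qY := lt_of_lt_of_le h0 hqY
    rw [Real.log_div (by positivity) hw.ne', Real.log_mul (by positivity) (by positivity),
        Real.log_rpow hqY0, Real.log_div h0.ne' hqY0.ne',
        Real.log_mul hqY0.ne' (by positivity), Real.log_div hw.ne' hU.ne',
        Real.log_div (by positivity) hZ.ne', Real.log_rpow hU]
    field_simp
    ring

lemma harg_aux {c Z w u : ℝ} (hc : 0 ≤ c) (hZ : 0 < Z) (hw : w ≠ 0) (hu : u ≠ 0)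
    {lam : ℝ} (hcu : c ^ (1 - lam) = u) (hZl : Z ^ (1 - lam) ≠ 0) :
    (c / Z) ^ (1 - lam) * (w / u) / w = Z ^ (-(1 - lam)) := by
  rw [Real.div_rpow hc hZ.le, hcu, Real.rpow_neg hZ.le]
  field_simp

theorem stmt_15 {X Y : Type*} [Fintype X] [Fintype Y]
    (P : X → ℝ) (hP0 : ∀ x, 0 < P x) (hP1 : ∑ x, P x = 1)
    (d : X → Y → ℝ) (hd0 : ∀ x y, 0 ≤ d x y)
    (lam : ℝ) (hlam : lam ∈ Set.Ico (0 : ℝ) 1) (nu : ℝ) (hnu : 0 ≤ nu)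
    (pYX : X → Y → ℝ) (hpYX0 : ∀ x y, 0 < pYX x y)
    (hpYX1 : ∀ x, ∑ y, pYX x y = 1) :
    let U : Y → ℝ := fun y => ∑ x, P x * Real.exp (-(lam * nu * d x y)) * (pYX x y) ^ (1 - lam)
    let As : ℝ := (1 - lam) * Real.log (∑ y, (U y) ^ ((1 : ℝ) / (1 - lam)))
    let Js : (X → Y → ℝ) → ℝ := fun q =>
      ∑ x, ∑ y, q x y *
        Real.log ((∑ x', q x' y) ^ (1 - lam) * (q x y / (∑ x', q x' y)) /
          (P x * Real.exp (-(lam * nu * d x y)) * (pYX x y) ^ (1 - lam)))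
    let qstar : X → Y → ℝ := fun x y =>
      ((U y) ^ ((1 : ℝ) / (1 - lam)) / (∑ y', (U y') ^ ((1 : ℝ) / (1 - lam)))) *
        (P x * Real.exp (-(lam * nu * d x y)) * (pYX x y) ^ (1 - lam) / U y)
    (∀ q : X → Y → ℝ, (∀ x y, 0 ≤ q x y) → (∑ x, ∑ y, q x y) = 1 → -As ≤ Js q) ∧
      Js qstar = -As := by
  obtain ⟨hlam0, hlam1⟩ := hlam
  have h1lam : (0:ℝ) < 1 - lam := by linarith
  intro U As Js qstar
  have hw0 : ∀ x y, 0 < P x * Real.exp (-(lam * nu * d x y)) * (pYX x y) ^ (1 - lam) :=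
    fun x y => mul_pos (mul_pos (hP0 x) (Real.exp_pos _)) (Real.rpow_pos_of_pos (hpYX0 x y) _)
  have hXne : Nonempty X := by
    by_contra h
    rw [not_nonempty_iff] at h
    rw [Finset.univ_eq_empty, Finset.sum_empty] at hP1
    norm_num at hP1
  have hYne : Nonempty Y := by
    by_contra h
    rw [not_nonempty_iff] at h
    have hx := hpYX1 (Classical.arbitrary X)
    rw [Finset.univ_eq_empty, Finset.sum_empty] at hx
    norm_num at hx
  have hU0 : ∀ y, 0 < U y := fun y => Finset.sum_pos (fun x _ => hw0 x y) Finset.univ_nonempty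
  have hc0 : ∀ y, 0 < (U y) ^ ((1 : ℝ) / (1 - lam)) :=
    fun y => Real.rpow_pos_of_pos (hU0 y) _
  have hZ0 : 0 < ∑ y, (U y) ^ ((1 : ℝ) / (1 - lam)) :=
    Finset.sum_pos (fun y _ => hc0 y) Finset.univ_nonempty
  set Z : ℝ := ∑ y, (U y) ^ ((1 : ℝ) / (1 - lam)) with hZdef
  have hcZ : ∑ y, (U y) ^ ((1 : ℝ) / (1 - lam)) / Z = 1 := by
    rw [← Finset.sum_div, ← hZdef, div_self hZ0.ne']
  have hAs : As = (1 - lam) * Real.log Z := rfl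
  constructor
  · -- the lower bound
    intro q hq0 hq1
    have hqY0 : ∀ y, 0 ≤ ∑ x, q x y := fun y => Finset.sum_nonneg fun x _ => hq0 x y
    have hqle : ∀ x y, q x y ≤ ∑ x', q x' y :=
      fun x y => Finset.single_le_sum (fun i _ => hq0 i y) (Finset.mem_univ x)
    have hqYsum : ∑ y, ∑ x, q x y = 1 := by rw [Finset.sum_comm]; exact hq1
    -- decompose Js q
    have key : Js q
        = (∑ x, ∑ y, q x y * (Real.log (q x y) -
              Real.log ((∑ x', q x' y) *
                (P x * Real.exp (-(lam * nu * d x y)) * (pYX x y) ^ (1 - lam) / U y))))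
          + (1 - lam) * (∑ x, ∑ y, q x y * (Real.log (∑ x', q x' y) -
              Real.log ((U y) ^ ((1 : ℝ) / (1 - lam)) / Z)))
          - (1 - lam) * Real.log Z := by
      have step : Js q
          = ∑ x, ∑ y, (q x y * (Real.log (q x y) -
                Real.log ((∑ x', q x' y) *
                  (P x * Real.exp (-(lam * nu * d x y)) * (pYX x y) ^ (1 - lam) / U y)))
              + (1 - lam) * (q x y * (Real.log (∑ x', q x' y) -
                Real.log ((U y) ^ ((1 : ℝ) / (1 - lam)) / Z)))
              - q x y * ((1 - lam) * Real.log Z)) := by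
        simp only [Js]
        refine Finset.sum_congr rfl fun x _ => Finset.sum_congr rfl fun y _ => ?_
        exact term_id (hq0 x y) (hw0 x y) (hU0 y) hZ0 hlam1 (hqle x y)
      rw [step]
      simp only [Finset.sum_sub_distrib, Finset.sum_add_distrib, ← Finset.mul_sum,
        ← Finset.sum_mul]
      rw [hq1, one_mul]
    rw [key, hAs]
    have hA1 : (0:ℝ) ≤ ∑ x, ∑ y, q x y * (Real.log (q x y) -
        Real.log ((∑ x', q x' y) *
          (P x * Real.exp (-(lam * nu * d x y)) * (pYX x y) ^ (1 - lam) / U y))) := by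
      have hlow : ∑ x, ∑ y, (q x y - (∑ x', q x' y) *
          (P x * Real.exp (-(lam * nu * d x y)) * (pYX x y) ^ (1 - lam) / U y)) = 0 := by
        simp only [Finset.sum_sub_distrib]
        rw [hq1, Finset.sum_comm]
        have : ∀ y, ∑ x, (∑ x', q x' y) *
              (P x * Real.exp (-(lam * nu * d x y)) * (pYX x y) ^ (1 - lam) / U y)
              = ∑ x', q x' y := by
          intro y
          rw [← Finset.mul_sum, ← Finset.sum_div]
          have hUy : U y = ∑ x, P x * Real.exp (-(lam * nu * d x y)) * (pYX x y) ^ (1 - lam) :=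
            rfl
          rw [← hUy, div_self (hU0 y).ne', mul_one]
        rw [Finset.sum_congr rfl fun y _ => this y, hqYsum]
        ring
      calc (0:ℝ) = ∑ x, ∑ y, (q x y - (∑ x', q x' y) *
            (P x * Real.exp (-(lam * nu * d x y)) * (pYX x y) ^ (1 - lam) / U y)) := hlow.symm
        _ ≤ _ := by
          refine Finset.sum_le_sum fun x _ => Finset.sum_le_sum fun y _ => ?_
          refine gibbs_aux (hq0 x y) ?_ ?_
          · exact mul_nonneg (hqY0 y) (div_nonneg (hw0 x y).le (hU0 y).le)
          · intro hb
            rcases mul_eq_zero.mp hb with h | h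
            · exact le_antisymm (h ▸ hqle x y) (hq0 x y)
            · exact absurd h (div_pos (hw0 x y) (hU0 y)).ne'
    have hA2 : (0:ℝ) ≤ ∑ x, ∑ y, q x y * (Real.log (∑ x', q x' y) -
        Real.log ((U y) ^ ((1 : ℝ) / (1 - lam)) / Z)) := by
      rw [Finset.sum_comm]
      have hform : ∀ y, ∑ x, q x y * (Real.log (∑ x', q x' y) -
          Real.log ((U y) ^ ((1 : ℝ) / (1 - lam)) / Z))
          = (∑ x, q x y) * (Real.log (∑ x', q x' y) -
            Real.log ((U y) ^ ((1 : ℝ) / (1 - lam)) / Z)) := by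
        intro y; rw [Finset.sum_mul]
      rw [Finset.sum_congr rfl fun y _ => hform y]
      have hlow : ∑ y, ((∑ x, q x y) - (U y) ^ ((1 : ℝ) / (1 - lam)) / Z) = 0 := by
        rw [Finset.sum_sub_distrib, hqYsum, hcZ]; ring
      calc (0:ℝ) = ∑ y, ((∑ x, q x y) - (U y) ^ ((1 : ℝ) / (1 - lam)) / Z) := hlow.symm
        _ ≤ _ := by
          refine Finset.sum_le_sum fun y _ => ?_
          exact gibbs_aux (hqY0 y) (div_pos (hc0 y) hZ0).le
            (fun h => absurd h (div_pos (hc0 y) hZ0).ne')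
    nlinarith [mul_le_mul_of_nonneg_left hA2 h1lam.le]
  · -- the optimum
    have hqstarY : ∀ y, ∑ x, qstar x y = (U y) ^ ((1 : ℝ) / (1 - lam)) / Z := by
      intro y
      simp only [qstar]
      rw [← Finset.mul_sum, ← Finset.sum_div]
      have hUy : U y = ∑ x, P x * Real.exp (-(lam * nu * d x y)) * (pYX x y) ^ (1 - lam) := rfl
      rw [← hUy, div_self (hU0 y).ne', mul_one, ← hZdef]
    have hqstarsum : ∑ x, ∑ y, qstar x y = 1 := by
      rw [Finset.sum_comm, Finset.sum_congr rfl fun y _ => hqstarY y, hcZ]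
    have hlogterm : ∀ x y,
        Real.log ((∑ x', qstar x' y) ^ (1 - lam) * (qstar x y / (∑ x', qstar x' y)) /
          (P x * Real.exp (-(lam * nu * d x y)) * (pYX x y) ^ (1 - lam)))
        = -((1 - lam) * Real.log Z) := by
      intro x y
      rw [hqstarY y]
      have hww : 0 < P x * Real.exp (-(lam * nu * d x y)) * (pYX x y) ^ (1 - lam) := hw0 x y
      have hcZpos : 0 < (U y) ^ ((1 : ℝ) / (1 - lam)) / Z := div_pos (hc0 y) hZ0
      have h1 : qstar x y / ((U y) ^ ((1 : ℝ) / (1 - lam)) / Z)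
          = P x * Real.exp (-(lam * nu * d x y)) * (pYX x y) ^ (1 - lam) / U y := by
        simp only [qstar, ← hZdef]
        rw [mul_div_cancel_left₀ _ hcZpos.ne']
      rw [h1]
      have hrw : ((U y) ^ ((1 : ℝ) / (1 - lam))) ^ (1 - lam) = U y := by
        rw [← Real.rpow_mul (hU0 y).le, one_div, inv_mul_cancel₀ h1lam.ne', Real.rpow_one]
      have harg := harg_aux (hc0 y).le hZ0 hww.ne' (hU0 y).ne' hrw
        (Real.rpow_pos_of_pos hZ0 (1 - lam)).ne'
      rw [harg, Real.log_rpow hZ0]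
      ring
    have hJs : Js qstar = ∑ x, ∑ y, qstar x y * -((1 - lam) * Real.log Z) := by
      simp only [Js]
      exact Finset.sum_congr rfl fun x _ => Finset.sum_congr rfl fun y _ => by
        rw [hlogterm x y]
    rw [hJs]
    simp only [← Finset.sum_mul]
    rw [hqstarsum, one_mul, hAs]
end

section
/- Let X, Y be finite sets, P_X a pmf with positive entries, d : X × Y → [0,∞), ρ ∈ (−1,0)∪(0,∞), ν ≥ 0, p̂_Y a pmf on Y with positive entries, and p_{Y|X} a conditional pmf with positive entries. With p*_{Y|X}(p̂_Y)(y|x) = p̂_Y(y)e^{−ν d(x,y)}/Σ_{y'} p̂_Y(y')e^{−ν d(x,y')} and p*_X(p̂_Y)(x) = P_X(x)( Σ_y p̂_Y(y)e^{−ν d(x,y)} )^{−ρ} / Σ_{x'} P_X(x')( Σ_y p̂_Y(y)e^{−ν d(x',y)} )^{−ρ}, we have the exact identity F_{AR,s}^{(ρ,ν)}(p̂_Y, p_{Y|X}|P_X) = (1/ρ) E_{0,s}^{(ρ,ν)}(p̂_Y|P_X) + D_{1+ρ}( p_{Y|X} ‖ p*_{Y|X}(p̂_Y) | p*_X(p̂_Y)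 ), where D_{1+ρ}(p‖q|r) = (1/ρ) log Σ_x r(x) Σ_y p(y|x)^{1+ρ} q(y|x)^{−ρ}. -/
open Finset Real

theorem stmt_17 {X Y : Type*} [Fintype X] [Fintype Y]
    (P : X → ℝ) (hP0 : ∀ x, 0 < P x) (hP1 : ∑ x, P x = 1)
    (d : X → Y → ℝ) (hd0 : ∀ x y, 0 ≤ d x y)
    (rho : ℝ) (hrho1 : -1 < rho) (hrho3 : rho ≠ 0)
    (nu : ℝ) (hnu : 0 ≤ nu)
    (phatY : Y → ℝ) (hphatY0 : ∀ y, 0 < phatY y) (hphatY1 : ∑ y, phatY y = 1)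
    (pYX : X → Y → ℝ) (hpYX0 : ∀ x y, 0 < pYX x y)
    (hpYX1 : ∀ x, ∑ y, pYX x y = 1) :
    let FARs : ℝ := (1 / rho) * Real.log (∑ x, ∑ y,
      P x * Real.exp (rho * nu * d x y) * (phatY y) ^ (-rho) * (pYX x y) ^ (1 + rho))
    let E0s : ℝ := Real.log (∑ x, P x *
      (∑ y, phatY y * Real.exp (-(nu * d x y))) ^ (-rho))
    let kstar : X → Y → ℝ := fun x y =>
      phatY y * Real.exp (-(nu * d x y)) / (∑ y', phatY y' * Real.exp (-(nu * d x y')))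
    let pXstar : X → ℝ := fun x =>
      P x * (∑ y, phatY y * Real.exp (-(nu * d x y))) ^ (-rho) /
        (∑ x', P x' * (∑ y, phatY y * Real.exp (-(nu * d x' y))) ^ (-rho))
    let condRenyi : ℝ := (1 / rho) * Real.log (∑ x, pXstar x *
      ∑ y, (pYX x y) ^ (1 + rho) * (kstar x y) ^ (-rho))
    FARs = (1 / rho) * E0s + condRenyi := by
  intro FARs E0s kstar pXstar condRenyi
  -- nonemptiness
  have hXne : (Finset.univ : Finset X).Nonempty := by
    by_contra h
    rw [Finset.not_nonempty_iff_eq_empty] at h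
    rw [h, Finset.sum_empty] at hP1
    norm_num at hP1
  have hYne : (Finset.univ : Finset Y).Nonempty := by
    by_contra h
    rw [Finset.not_nonempty_iff_eq_empty] at h
    rw [h, Finset.sum_empty] at hphatY1
    norm_num at hphatY1
  set Z : X → ℝ := fun x => ∑ y, phatY y * Real.exp (-(nu * d x y)) with hZdef
  have hZ : ∀ x, 0 < Z x := fun x =>
    Finset.sum_pos (fun y _ => mul_pos (hphatY0 y) (Real.exp_pos _)) hYne
  set S : ℝ := ∑ x, P x * Z x ^ (-rho) with hSdef
  have hS : 0 < S :=
    Finset.sum_pos (fun x _ => mul_pos (hP0 x) (Real.rpow_pos_of_pos (hZ x) _)) hXne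
  set A : ℝ := ∑ x, ∑ y,
      P x * Real.exp (rho * nu * d x y) * (phatY y) ^ (-rho) * (pYX x y) ^ (1 + rho)
    with hAdef
  have hA : 0 < A :=
    Finset.sum_pos (fun x _ => Finset.sum_pos (fun y _ =>
      mul_pos (mul_pos (mul_pos (hP0 x) (Real.exp_pos _))
        (Real.rpow_pos_of_pos (hphatY0 y) _)) (Real.rpow_pos_of_pos (hpYX0 x y) _)) hYne) hXne
  have hk : ∀ x y, (kstar x y) ^ (-rho)
      = (phatY y) ^ (-rho) * Real.exp (rho * nu * d x y) * (Z x) ^ rho := by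
    intro x y
    have h1 : kstar x y = (phatY y * Real.exp (-(nu * d x y))) / Z x := rfl
    rw [h1, Real.div_rpow (le_of_lt (mul_pos (hphatY0 y) (Real.exp_pos _))) (hZ x).le,
      Real.mul_rpow (hphatY0 y).le (Real.exp_pos _).le, ← Real.exp_mul,
      Real.rpow_neg (hZ x).le, div_eq_mul_inv, inv_inv,
      show -(nu * d x y) * -rho = rho * nu * d x y by ring]
  have hT : (∑ x, pXstar x * ∑ y, (pYX x y) ^ (1 + rho) * (kstar x y) ^ (-rho)) = A / S := by
    rw [hAdef, Finset.sum_div]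
    refine Finset.sum_congr rfl fun x _ => ?_
    have hpx : pXstar x = P x * Z x ^ (-rho) / S := rfl
    rw [hpx, Finset.sum_div]
    rw [Finset.mul_sum]
    refine Finset.sum_congr rfl fun y _ => ?_
    rw [hk x y]
    have hZZ : Z x ^ (-rho) * Z x ^ rho = 1 := by
      rw [← Real.rpow_add (hZ x)]
      simp
    rw [div_mul_eq_mul_div]
    congr 1
    linear_combination (P x * Real.exp (rho * nu * d x y) * phatY y ^ (-rho) *
      pYX x y ^ (1 + rho)) * hZZ
  have hE : E0s = Real.log S := rfl
  have hC : condRenyi = (1 / rho) * (Real.log A - Real.log S) := by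
    show (1 / rho) * Real.log (∑ x, pXstar x *
      ∑ y, (pYX x y) ^ (1 + rho) * (kstar x y) ^ (-rho)) = _
    rw [hT, Real.log_div (ne_of_gt hA) (ne_of_gt hS)]
  rw [hE, hC]
  show (1 / rho) * Real.log A = _
  ring
end

section
/- Let X, Y be finite sets, P_X a pmf with positive entries, d : X × Y → [0,∞), ν ≥ 0, and p̂_{Y|X} a conditional pmf with positive entries. Then lim_{ρ→0} (1/ρ) A_s^{(ρ,ν)}(p̂_{Y|X}|P_X) = I(P_X, p̂_{Y|X}) + ν E_{(P_X, p̂_{Y|X})}[d(X,Y)], where A_s^{(ρ,ν)}(p̂_{Y|X}|P_X) = (1+ρ) log Σ_y [ Σ_x P_X(x) e^{ρν d(x,y)} p̂_{Y|X}(y|x)^{1+ρ} ]^{1/(1+ρ)} and I(P_X, p̂_{Y|X}) is the mutual information of the joint distribution P_X(x)p̂_{Y|X}(y|x). -/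
open Finset Real

open Filter Topology

/-!
Write the quantity as `A(ρ) = (1 + ρ) log ∑_y G_y(ρ)^{1/(1+ρ)}` with
`G_y(ρ) = ∑_x P(x) e^{ρ ν d(x,y)} k(y|x)^{1+ρ}`. At `ρ = 0`, `G_y(0) = Q(y)` is the output marginal,
so `∑_y G_y(0) = 1` and `A(0) = 0`; the limit of `A(ρ)/ρ` is therefore `A'(0)`. The chain rule gives
`A'(0) = ∑_y (G_y'(0) - Q(y) log Q(y))` with `G_y'(0) = ∑_x P(x) k(y|x) (ν d(x,y) + log k(y|x))`,
and splitting `log k(y|x) - log Q(y) = log (k(y|x) / Q(y))` turns this into `I + ν E[d]`.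
-/

theorem hasDerivAt_exp_mul_mul_rpow_one_add {a : ℝ} (ha : 0 < a) (c : ℝ) :
    HasDerivAt (fun ρ => exp (ρ * c) * a ^ (1 + ρ)) (a * (c + Real.log a)) 0 := by
  have hexp : HasDerivAt (fun ρ => exp (ρ * c)) c 0 := by
    simpa using ((hasDerivAt_id (0 : ℝ)).mul_const c).exp
  have hpow : HasDerivAt (fun ρ : ℝ => a ^ (1 + ρ)) (Real.log a * a) 0 := by
    simpa using ((hasDerivAt_id (0 : ℝ)).const_add 1).const_rpow ha
  refine (hexp.fun_mul hpow).congr_deriv ?_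
  simp only [zero_mul, exp_zero, add_zero, rpow_one]
  ring

theorem HasDerivAt.rpow_one_div_one_add {f : ℝ → ℝ} {f' : ℝ} (hf : HasDerivAt f f' 0)
    (h0 : 0 < f 0) :
    HasDerivAt (fun ρ => f ρ ^ (1 / (1 + ρ))) (f' - f 0 * Real.log (f 0)) 0 := by
  have hexp : HasDerivAt (fun ρ : ℝ => 1 / (1 + ρ)) (-1) 0 := by
    simpa using ((hasDerivAt_id (0 : ℝ)).const_add 1).fun_inv (by norm_num)
  refine (hf.rpow hexp h0).congr_deriv ?_
  norm_num
  ring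

theorem HasDerivAt.one_add_mul_log {S : ℝ → ℝ} {S' : ℝ} (hS : HasDerivAt S S' 0) (h0 : S 0 = 1) :
    HasDerivAt (fun ρ => (1 + ρ) * Real.log (S ρ)) S' 0 := by
  refine (((hasDerivAt_id (0 : ℝ)).const_add 1).fun_mul (hS.log (by simp [h0]))).congr_deriv ?_
  simp [h0]

theorem HasDerivAt.tendsto_one_div_mul_of_apply_zero {F : ℝ → ℝ} {F' : ℝ}
    (hF : HasDerivAt F F' 0) (h0 : F 0 = 0) :
    Tendsto (fun ρ => 1 / ρ * F ρ) (𝓝[≠] 0) (𝓝 F') := by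
  simpa [h0, div_eq_inv_mul] using hF.tendsto_slope_zero

theorem sum_sub_marginal_mul_log_eq_mutualInfo_add {X Y : Type*} [Fintype X] [Fintype Y]
    (P : X → ℝ) (k d : X → Y → ℝ) (ν : ℝ) (hk : ∀ x y, k x y ≠ 0) (hQ : ∀ y, ∑ x, P x * k x y ≠ 0) :
    ∑ y, (∑ x, P x * (k x y * (ν * d x y + Real.log (k x y)))
        - (∑ x, P x * k x y) * Real.log (∑ x, P x * k x y)) =
      ∑ x, ∑ y, P x * k x y * Real.log (k x y / ∑ x', P x' * k x' y) +
        ν * ∑ x, ∑ y, P x * k x y * d x y := by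
  simp only [mul_sum, sum_mul, ← sum_add_distrib, ← sum_sub_distrib]
  rw [sum_comm]
  refine sum_congr rfl fun x _ => sum_congr rfl fun y _ => ?_
  rw [Real.log_div (hk x y) (hQ y)]
  ring

theorem stmt_18_general {X Y : Type*} [Fintype X] [Fintype Y]
    (P : X → ℝ) (hP0 : ∀ x, 0 < P x) (hP1 : ∑ x, P x = 1)
    (d : X → Y → ℝ) (nu : ℝ)
    (k : X → Y → ℝ) (hk0 : ∀ x y, 0 < k x y) (hk1 : ∀ x, ∑ y, k x y = 1) :
    Filter.Tendsto
      (fun rho : ℝ => (1 / rho) * ((1 + rho) * Real.log (∑ y,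
        (∑ x, P x * Real.exp (rho * nu * d x y) * (k x y) ^ (1 + rho)) ^ ((1 : ℝ) / (1 + rho)))))
      (nhdsWithin 0 (Set.Ioi (-1 : ℝ) \ {0}))
      (nhds ((∑ x, ∑ y, P x * k x y * Real.log (k x y / ∑ x', P x' * k x' y)) +
        nu * ∑ x, ∑ y, P x * k x y * d x y)) := by
  have : Nonempty X := by
    by_contra h
    simp [not_nonempty_iff.mp h] at hP1
  set Q : Y → ℝ := fun y => ∑ x, P x * k x y
  have hQ_pos (y : Y) : 0 < Q y := sum_pos (fun x _ => mul_pos (hP0 x) (hk0 x y)) univ_nonempty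
  have hQ_sum : ∑ y, Q y = 1 := by
    simp only [Q]
    rw [sum_comm]
    simp [← mul_sum, hk1, hP1]
  set G : Y → ℝ → ℝ := fun y ρ => ∑ x, P x * exp (ρ * nu * d x y) * k x y ^ (1 + ρ)
  have hG_zero (y : Y) : G y 0 = Q y := by simp [G, Q]
  have hG (y : Y) :
      HasDerivAt (G y) (∑ x, P x * (k x y * (nu * d x y + Real.log (k x y)))) 0 := by
    simpa only [G, mul_assoc] using HasDerivAt.fun_sum (u := univ) fun x _ =>
      (hasDerivAt_exp_mul_mul_rpow_one_add (hk0 x y) (nu * d x y)).const_mul (P x)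
  have hS := HasDerivAt.fun_sum (u := univ) fun y _ => (hG y).rpow_one_div_one_add
    (by rw [hG_zero]; exact hQ_pos y)
  have hS_zero : ∑ y, G y 0 ^ (1 / (1 + 0 : ℝ)) = 1 := by
    simp [hG_zero, hQ_sum]
  have hA := hS.one_add_mul_log hS_zero
  simp only [hG_zero] at hA
  rw [sum_sub_marginal_mul_log_eq_mutualInfo_add P k d nu (fun x y => (hk0 x y).ne')
    fun y => (hQ_pos y).ne'] at hA
  have hA_zero : (1 + 0) * Real.log (∑ y, G y 0 ^ (1 / (1 + 0 : ℝ))) = 0 := by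
    rw [hS_zero, Real.log_one, mul_zero]
  exact (hA.tendsto_one_div_mul_of_apply_zero hA_zero).mono_left
    (nhdsWithin_mono _ fun ρ h => h.2)

theorem stmt_18 {X Y : Type*} [Fintype X] [Fintype Y]
    (P : X → ℝ) (hP0 : ∀ x, 0 < P x) (hP1 : ∑ x, P x = 1)
    (d : X → Y → ℝ) (hd0 : ∀ x y, 0 ≤ d x y) (nu : ℝ) (hnu : 0 ≤ nu)
    (k : X → Y → ℝ) (hk0 : ∀ x y, 0 < k x y) (hk1 : ∀ x, ∑ y, k x y = 1) :
    Filter.Tendsto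
      (fun rho : ℝ => (1 / rho) * ((1 + rho) * Real.log (∑ y,
        (∑ x, P x * Real.exp (rho * nu * d x y) * (k x y) ^ (1 + rho)) ^ ((1 : ℝ) / (1 + rho)))))
      (nhdsWithin 0 (Set.Ioi (-1 : ℝ) \ {0}))
      (nhds ((∑ x, ∑ y, P x * k x y * Real.log (k x y / ∑ x', P x' * k x' y)) +
        nu * ∑ x, ∑ y, P x * k x y * d x y)) :=
  stmt_18_general P hP0 hP1 d nu k hk0 hk1
end
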